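/- arXiv:1412.5651 — 7 statements merged into one kernel-verified Lean document; each statement's English description precedes it below -/
import Mathlib

section
/- Let B be a noetherian normal domain, I an ideal of B, and B̂ the I-adic completion of B. Let f ∈ B̂ be a non-zerodivisor such that the vanishing locus V(f) is contained in V(I·B̂). Then there exists a Zariski open covering Spec B = ⋃_j Spec B_j such that on each (B_j)^ (the I-adic completion of B_j) one can write f = g_j·u_j with g_j ∈ B_j and u_j a unit of (B_j)^. -/
/-- The `I`-adic completion of a commutative ring `B`, realized as the subring of
compatible families in `Π n, B ⧸ I ^ n`. -/
def AdicCpl {B : Type*} [CommRing B] (I : Ideal B) : Subring (∀ n : ℕ, B ⧸ I ^ n) where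
  carrier := {x | ∀ ⦃m n : ℕ⦄ (h : m ≤ n),
    Ideal.Quotient.factor (Ideal.pow_le_pow_right h) (x n) = x m}
  mul_mem' {x y} hx hy := by
    intro m n h
    rw [Pi.mul_apply, Pi.mul_apply, _root_.map_mul, hx h, hy h]
  one_mem' := by
    intro m n h
    rw [Pi.one_apply, Pi.one_apply, _root_.map_one]
  add_mem' {x y} hx hy := by
    intro m n h
    rw [Pi.add_apply, Pi.add_apply, _root_.map_add, hx h, hy h]
  zero_mem' := by
    intro m n h
    rw [Pi.zero_apply, Pi.zero_apply, _root_.map_zero]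
  neg_mem' {x} hx := by
    intro m n h
    rw [Pi.neg_apply, Pi.neg_apply, _root_.map_neg, hx h]

/-- The canonical ring homomorphism from `B` to its `I`-adic completion. -/
def toAdicCpl {B : Type*} [CommRing B] (I : Ideal B) : B →+* AdicCpl I where
  toFun b := ⟨fun n => Ideal.Quotient.mk (I ^ n) b, fun m n h => Ideal.Quotient.factor_mk _ b⟩
  map_one' := Subtype.ext (funext fun n => _root_.map_one _)
  map_mul' a b := Subtype.ext (funext fun n => _root_.map_mul _ a b)
  map_zero' := Subtype.ext (funext fun n => _root_.map_zero _)
  map_add' a b := Subtype.ext (funext fun n => _root_.map_add _ a b)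

/-- Functoriality of the adic completion along a ring homomorphism. -/
def adicCplMap {B C : Type*} [CommRing B] [CommRing C] (I : Ideal B) (φ : B →+* C) :
    AdicCpl I →+* AdicCpl (I.map φ) where
  toFun x := ⟨fun n => Ideal.quotientMap ((I.map φ) ^ n) φ
      (by rw [← Ideal.map_pow]; exact Ideal.le_comap_map) (x.1 n), by
    intro m n h
    obtain ⟨b, hb⟩ := Ideal.Quotient.mk_surjective (x.1 n)
    have h2 : (x.1 m) = Ideal.Quotient.mk (I ^ m) b := by
      rw [← x.2 h, ← hb, Ideal.Quotient.factor_mk]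
    show Ideal.Quotient.factor _ (Ideal.quotientMap _ φ _ (x.1 n))
      = Ideal.quotientMap _ φ _ (x.1 m)
    rw [← hb, h2, Ideal.quotientMap_mk, Ideal.Quotient.factor_mk, Ideal.quotientMap_mk]⟩
  map_one' := Subtype.ext (funext fun n => by
    show Ideal.quotientMap _ φ _ 1 = 1
    exact _root_.map_one _)
  map_mul' a b := Subtype.ext (funext fun n => by
    show Ideal.quotientMap _ φ _ (a.1 n * b.1 n) = _
    exact _root_.map_mul _ _ _)
  map_zero' := Subtype.ext (funext fun n => by
    show Ideal.quotientMap _ φ _ 0 = 0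
    exact _root_.map_zero _)
  map_add' a b := Subtype.ext (funext fun n => by
    show Ideal.quotientMap _ φ _ (a.1 n + b.1 n) = _
    exact _root_.map_add _ _ _)

/-!
Since `V(f) ⊆ V(I B̂)` and `I` is finitely generated, `(I B̂)^N ⊆ f B̂` for some `N`. Pick `b ∈ B`
with `f ≡ b mod I^N`; by completeness `f - b ∈ I^N B̂`. Every element of `I^N B̂` has the form
`g + f c` with `g ∈ I^N` and `c ∈ I B̂`, so `f (1 - c) = b + g`, and `1 - c` is a unit because
`B̂ → B/I` reflects units. Thus `f` is a unit multiple of an element of `B` already on `B̂`, and the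
trivial covering of `Spec B` works.
-/

lemma Ideal.exists_eq_sum_mul_of_mem_span_mul {B : Type*} [CommRing B] {S : Finset B}
    {K : Ideal B} {ξ : B} (hξ : ξ ∈ Ideal.span (S : Set B) * K) :
    ∃ d : B → B, (∀ t, d t ∈ K) ∧ ξ = ∑ t ∈ S, t * d t := by
  refine Submodule.mul_induction_on hξ ?_ ?_
  · intro m hm n hn
    obtain ⟨c, -, rfl⟩ := Submodule.mem_span_finset.mp hm
    refine ⟨fun t => c t * n, fun t => K.mul_mem_left _ hn, ?_⟩
    simp only [smul_eq_mul, Finset.sum_mul, mul_assoc, mul_comm (c _)]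
  · rintro x y ⟨d, hd, rfl⟩ ⟨d', hd', rfl⟩
    exact ⟨d + d', fun t => K.add_mem (hd t) (hd' t), by
      simp only [Pi.add_apply, mul_add, Finset.sum_add_distrib]⟩

namespace AdicCpl

variable {B : Type*} [CommRing B] {I : Ideal B}

variable (I) in
def eval (n : ℕ) : AdicCpl I →+* B ⧸ I ^ n :=
  (Pi.evalRingHom (fun n => B ⧸ I ^ n) n).comp (AdicCpl I).subtype

@[simp]
lemma eval_toAdicCpl (n : ℕ) (b : B) :
    eval I n (toAdicCpl I b) = Ideal.Quotient.mk (I ^ n) b :=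
  rfl

lemma factor_eval {m n : ℕ} (h : m ≤ n) (x : AdicCpl I) :
    Ideal.Quotient.factor (Ideal.pow_le_pow_right h) (eval I n x) = eval I m x :=
  x.2 h

@[ext]
lemma ext {x y : AdicCpl I} (h : ∀ n, eval I n x = eval I n y) : x = y :=
  Subtype.ext (funext h)

lemma exists_sub_toAdicCpl_mem_ker_eval (n : ℕ) (x : AdicCpl I) :
    ∃ b : B, x - toAdicCpl I b ∈ RingHom.ker (eval I n) := by
  obtain ⟨b, hb⟩ := Ideal.Quotient.mk_surjective (eval I n x)
  exact ⟨b, by rw [RingHom.mem_ker, map_sub, eval_toAdicCpl, hb, sub_self]⟩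

lemma isUnit_of_forall_isUnit_eval {w : AdicCpl I} (hw : ∀ n, IsUnit (eval I n w)) :
    IsUnit w := by
  refine IsUnit.of_mul_eq_one ⟨fun n => ↑(hw n).unit⁻¹, fun m n h => ?_⟩
    (ext fun n => (hw n).mul_val_inv)
  have hunit : Units.map (Ideal.Quotient.factor (Ideal.pow_le_pow_right h)).toMonoidHom
      (hw n).unit = (hw m).unit := Units.ext (factor_eval h w)
  beta_reduce
  rw [← hunit, Units.coe_map_inv]
  rfl

lemma isUnit_of_isUnit_eval_one {w : AdicCpl I} (hw : IsUnit (eval I 1 w)) : IsUnit w := by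
  refine isUnit_of_forall_isUnit_eval fun n => ?_
  rcases Nat.eq_zero_or_pos n with rfl | hn
  · rw [← factor_eval zero_le_one]
    exact hw.map _
  obtain ⟨r, hr⟩ := Ideal.Quotient.mk_surjective (eval I n w)
  have hr1 : eval I 1 w = Ideal.Quotient.mk (I ^ 1) r := by
    rw [← factor_eval hn, ← hr, Ideal.Quotient.factor_mk]
  rw [← hr, Ideal.Quotient.isUnit_mk_pow_iff_isUnit_mk I hn.ne',
    ← Ideal.Quotient.isUnit_mk_pow_iff_isUnit_mk I one_ne_zero, ← hr1]
  exact hw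

variable (I) in
def series (δ : ℕ → B) (hδ : ∀ i, δ i ∈ I ^ i) : AdicCpl I :=
  ⟨fun n => Ideal.Quotient.mk _ (∑ i ∈ Finset.range n, δ i), fun m n h => by
    rw [Ideal.Quotient.factor_mk, Ideal.Quotient.eq, ← Finset.sum_Ico_eq_sub _ h]
    exact Ideal.sum_mem _ fun i hi => Ideal.pow_le_pow_right (Finset.mem_Ico.1 hi).1 (hδ i)⟩

@[simp]
lemma eval_series (δ : ℕ → B) (hδ : ∀ i, δ i ∈ I ^ i) (n : ℕ) :
    eval I n (series I δ hδ) = Ideal.Quotient.mk _ (∑ i ∈ Finset.range n, δ i) :=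
  rfl

lemma series_mem_map {J : Ideal B} (hJ : J.FG) (δ : ℕ → B) (hδ : ∀ i, δ i ∈ J * I ^ i) :
    series I δ (fun i => Ideal.mul_le_right (hδ i)) ∈ J.map (toAdicCpl I) := by
  obtain ⟨S, rfl⟩ := hJ
  choose d hdI hd using fun i => Ideal.exists_eq_sum_mul_of_mem_span_mul (hδ i)
  have hsum : series I δ (fun i => Ideal.mul_le_right (hδ i)) =
      ∑ t ∈ S, toAdicCpl I t * series I (fun i => d i t) (fun i => hdI i t) := by
    ext n
    simp only [eval_series, map_sum, map_mul, eval_toAdicCpl, hd, Finset.mul_sum]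
    exact Finset.sum_comm
  rw [hsum]
  exact Ideal.sum_mem _ fun t ht =>
    Ideal.mul_mem_right _ _ (Ideal.mem_map_of_mem _ (Ideal.subset_span ht))

lemma ker_eval_le_map_pow (hI : I.FG) (N : ℕ) :
    RingHom.ker (eval I N) ≤ (I ^ N).map (toAdicCpl I) := by
  intro x hx
  choose ρ hρ using fun k => Ideal.Quotient.mk_surjective (eval I (N + k) x)
  have hρ0 : ρ 0 ∈ I ^ N := Ideal.Quotient.eq_zero_iff_mem.1 ((hρ 0).trans hx)
  have hstep (i : ℕ) : ρ (i + 1) - ρ i ∈ I ^ N * I ^ i := by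
    rw [← pow_add, ← Ideal.Quotient.eq, hρ i, ← factor_eval (show N + i ≤ N + (i + 1) by omega),
      ← hρ (i + 1), Ideal.Quotient.factor_mk]
  have hseries : x = toAdicCpl I (ρ 0) + series I _ (fun i => Ideal.mul_le_right (hstep i)) := by
    ext n
    rw [map_add, eval_series, Finset.sum_range_sub, eval_toAdicCpl, ← map_add, add_sub_cancel,
      ← factor_eval (Nat.le_add_left n N), ← hρ n, Ideal.Quotient.factor_mk]
  rw [hseries]
  exact Ideal.add_mem _ (Ideal.mem_map_of_mem _ hρ0) (series_mem_map hI.pow _ hstep)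

lemma exists_mem_eq_toAdicCpl_add_mul {J : Ideal B} {f : AdicCpl I}
    (hJ : J.map (toAdicCpl I) ≤ Ideal.span {f}) {x : AdicCpl I}
    (hx : x ∈ J.map (toAdicCpl I)) :
    ∃ g ∈ J, ∃ c ∈ RingHom.ker (eval I 1), x = toAdicCpl I g + f * c := by
  induction hx using Submodule.span_induction with
  | mem _ hx =>
    obtain ⟨g, hg, rfl⟩ := hx
    exact ⟨g, hg, 0, zero_mem _, by rw [mul_zero, add_zero]⟩
  | zero => exact ⟨0, zero_mem _, 0, zero_mem _, by rw [map_zero, mul_zero, add_zero]⟩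
  | add _ _ _ _ hx hy =>
    obtain ⟨g, hg, c, hc, rfl⟩ := hx
    obtain ⟨g', hg', c', hc', rfl⟩ := hy
    exact ⟨g + g', J.add_mem hg hg', c + c', Ideal.add_mem _ hc hc', by rw [map_add]; ring⟩
  | smul a _ _ hx =>
    obtain ⟨g, hg, c, hc, rfl⟩ := hx
    obtain ⟨e, he⟩ := exists_sub_toAdicCpl_mem_ker_eval 1 a
    -- Split `a = e + (a - e)` with `e ∈ B`: as `g ∈ f B̂`, the term `(a - e) g` goes into `f c`.
    obtain ⟨w, hw⟩ := Ideal.mem_span_singleton'.mp (hJ (Ideal.mem_map_of_mem _ hg))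
    refine ⟨e * g, J.mul_mem_left e hg, (a - toAdicCpl I e) * w + a * c,
      Ideal.add_mem _ (Ideal.mul_mem_right _ _ he) (Ideal.mul_mem_left _ _ hc), ?_⟩
    rw [smul_eq_mul, map_mul, ← hw]
    ring

lemma exists_eq_toAdicCpl_mul_unit (hI : I.FG) {N : ℕ} {f : AdicCpl I}
    (hN : (I ^ N).map (toAdicCpl I) ≤ Ideal.span {f}) :
    ∃ (g : B) (u : (AdicCpl I)ˣ), f = toAdicCpl I g * u := by
  obtain ⟨b, hb⟩ := exists_sub_toAdicCpl_mem_ker_eval N f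
  obtain ⟨g, -, c, hc, hfc⟩ :=
    exists_mem_eq_toAdicCpl_add_mul hN (ker_eval_le_map_pow hI N hb)
  have hu : IsUnit (1 - c) := isUnit_of_isUnit_eval_one (by
    rw [map_sub, map_one, RingHom.mem_ker.1 hc, sub_zero]
    exact isUnit_one)
  refine ⟨b + g, hu.unit⁻¹, ?_⟩
  rw [Units.eq_mul_inv_iff_mul_eq, IsUnit.unit_spec, map_add]
  linear_combination hfc

end AdicCpl

lemma adicCplMap_toAdicCpl {B C : Type*} [CommRing B] [CommRing C] (I : Ideal B)
    (φ : B →+* C) (b : B) :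
    adicCplMap I φ (toAdicCpl I b) = toAdicCpl (I.map φ) (φ b) :=
  Subtype.ext (funext fun _ => Ideal.quotientMap_mk)

theorem nonzerodivisor_locally_principal_up_to_unit_general
    {B : Type*} [CommRing B] [IsNoetherianRing B]
    (I : Ideal B) (f : AdicCpl I)
    (hV : ∀ P : Ideal (AdicCpl I), P.IsPrime → f ∈ P → I.map (toAdicCpl I) ≤ P) :
    ∃ s : Finset B, Ideal.span (s : Set B) = ⊤ ∧
      ∀ j ∈ s, ∃ g : Localization.Away j,
        ∃ u : (AdicCpl (I.map (algebraMap B (Localization.Away j))))ˣ,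
          adicCplMap I (algebraMap B (Localization.Away j)) f =
            toAdicCpl (I.map (algebraMap B (Localization.Away j))) g * u := by
  have hI : I.FG := IsNoetherian.noetherian I
  have hrad : I.map (toAdicCpl I) ≤ (Ideal.span {f}).radical := by
    rw [Ideal.radical_eq_sInf]
    exact le_sInf fun P ⟨hfP, hP⟩ => hV P hP (hfP (Ideal.mem_span_singleton_self f))
  obtain ⟨N, hN⟩ := Ideal.exists_pow_le_of_le_radical_of_fg hrad (hI.map _)
  rw [← Ideal.map_pow] at hN
  obtain ⟨g, u, rfl⟩ := AdicCpl.exists_eq_toAdicCpl_mul_unit hI hN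
  refine ⟨{1}, by simp, fun j _ => ⟨algebraMap B _ g, Units.map (adicCplMap I _).toMonoidHom u, ?_⟩⟩
  rw [map_mul, adicCplMap_toAdicCpl]
  rfl

/-- Let `B` be a noetherian normal domain, `I` an ideal of `B`, and `B̂`
the `I`-adic completion of `B`.  Let `f ∈ B̂` be a non-zerodivisor such that `V(f) ⊆ V(I·B̂)`
(every prime of `B̂` containing `f` contains `I·B̂`).  Then there is a Zariski open covering
`Spec B = ⋃ⱼ Spec B[1/sⱼ]` (elements `sⱼ` generating the unit ideal) such that on the
`I`-adic completion of each `B[1/sⱼ]` one can write `f = gⱼ·uⱼ` with `gⱼ ∈ B[1/sⱼ]` and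
`uⱼ` a unit of the completion. -/
theorem nonzerodivisor_locally_principal_up_to_unit
    {B : Type*} [CommRing B] [IsDomain B] [IsNoetherianRing B] [IsIntegrallyClosed B]
    (I : Ideal B) (f : AdicCpl I)
    (hf : f ∈ nonZeroDivisors (AdicCpl I))
    (hV : ∀ P : Ideal (AdicCpl I), P.IsPrime → f ∈ P → I.map (toAdicCpl I) ≤ P) :
    ∃ s : Finset B, Ideal.span (s : Set B) = ⊤ ∧
      ∀ j ∈ s, ∃ g : Localization.Away j,
        ∃ u : (AdicCpl (I.map (algebraMap B (Localization.Away j))))ˣ,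
          adicCplMap I (algebraMap B (Localization.Away j)) f =
            toAdicCpl (I.map (algebraMap B (Localization.Away j))) g * u :=
  nonzerodivisor_locally_principal_up_to_unit_general I f hV
end

section
/- Let B be a noetherian normal domain, I ⊆ B an ideal, D a Weil divisor (codimension-one cycle) on Spec B whose support is contained in V(I), and suppose the ideal I_D · B̂ is principal in the I-adic completion B̂ of B, where B̂ is a normal domain and B → B̂ is flat. Then I_D · B' is principal, where B' = (1+I)^{-1}B. -/
/-! Because `B` is noetherian, `I·B̂` lies in the Jacobson radical of `B̂` and `B → B̂ ⧸ I·B̂` is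
surjective, so by Nakayama a generator of `J·B̂` can be chosen as the image of some `y ∈ J`.
For `a ∈ J`, `a ∈ y·B̂` gives `a ∈ y·B + I^m` for every `m`, and Krull's intersection theorem in
`B ⧸ y·B` yields `r ∈ I` with `(1 - r)·a ∈ y·B`. Hence `J·B' = y·B'`. -/

/-- The multiplicative set `1 + I` in a commutative ring. -/
def onePlus {B : Type*} [CommRing B] (I : Ideal B) : Submonoid B where
  carrier := {b | ∃ x ∈ I, b = 1 + x}
  one_mem' := ⟨0, Ideal.zero_mem I, by ring⟩
  mul_mem' := by
    rintro a b ⟨x, hx, rfl⟩ ⟨y, hy, rfl⟩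
    exact ⟨x + y + x * y, by
      refine I.add_mem (I.add_mem hx hy) (I.mul_mem_right y hx), by ring⟩

namespace Ideal

variable {R S : Type*} [CommRing R] [CommRing S]

theorem exists_mem_sub_mem_mul_map (f : R →+* S) {N : Ideal S} (hf : ∀ s, ∃ r, s - f r ∈ N)
    (J : Ideal R) {z : S} (hz : z ∈ J.map f) : ∃ y ∈ J, z - f y ∈ N * J.map f := by
  induction hz using Submodule.span_induction with
  | mem _ h =>
    obtain ⟨a, ha, rfl⟩ := h
    exact ⟨a, ha, by simp⟩
  | zero => exact ⟨0, J.zero_mem, by simp⟩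
  | add z w _ _ hz hw =>
    obtain ⟨y, hy, hzy⟩ := hz
    obtain ⟨y', hy', hwy⟩ := hw
    refine ⟨y + y', J.add_mem hy hy', ?_⟩
    rw [map_add, add_sub_add_comm]
    exact add_mem hzy hwy
  | smul s z hzJ hz =>
    obtain ⟨y, hy, hzy⟩ := hz
    obtain ⟨r, hr⟩ := hf s
    refine ⟨r * y, J.mul_mem_left r hy, ?_⟩
    have hsplit : s • z - f (r * y) = f r * (z - f y) + (s - f r) * z := by
      rw [smul_eq_mul, map_mul]; ring
    rw [hsplit]
    exact add_mem (mul_mem_left _ _ hzy) (mul_mem_mul hr hzJ)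

theorem exists_mem_map_eq_span_singleton (f : R →+* S) {N : Ideal S} (hN : N ≤ jacobson ⊥)
    (hf : ∀ s, ∃ r, s - f r ∈ N) {J : Ideal R} (hJ : J.FG) (h : (J.map f).IsPrincipal) :
    ∃ y ∈ J, J.map f = span {f y} := by
  obtain ⟨x, hx⟩ := h.principal
  have hxJ : x ∈ J.map f := hx ▸ Submodule.mem_span_singleton_self x
  obtain ⟨y, hyJ, hxy⟩ := exists_mem_sub_mem_mul_map f hf J hxJ
  refine ⟨y, hyJ, le_antisymm ?_ (span_singleton_le_iff_mem _ |>.mpr (mem_map_of_mem f hyJ))⟩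
  have hx_mem : x ∈ span {f y} ⊔ N • J.map f :=
    Submodule.mem_sup.mpr ⟨f y, mem_span_singleton_self _, x - f y, hxy, by ring⟩
  exact Submodule.le_of_le_smul_of_le_jacobson_bot (hJ.map f) hN <|
    hx.le.trans ((Submodule.span_singleton_le_iff_mem _ _).mpr hx_mem)

theorem exists_mem_onePlus_mul_mem_of_forall_mem_sup_pow [IsNoetherianRing R] {I K : Ideal R}
    {a : R} (ha : ∀ m : ℕ, a ∈ K ⊔ I ^ m) : ∃ s ∈ onePlus I, s * a ∈ K := by
  have hKrull : Submodule.mkQ K a ∈ (⨅ m : ℕ, I ^ m • ⊤ : Submodule R (R ⧸ K)) := by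
    refine Submodule.mem_iInf _ |>.mpr fun m => ?_
    obtain ⟨k, hk, i, hi, rfl⟩ := Submodule.mem_sup.mp (ha m)
    have hk0 : Submodule.mkQ K k = 0 := (Submodule.Quotient.mk_eq_zero K).mpr hk
    rw [map_add, hk0, zero_add, ← mul_one i, ← smul_eq_mul, map_smul]
    exact Submodule.smul_mem_smul hi Submodule.mem_top
  obtain ⟨r, hr⟩ := (I.mem_iInf_smul_pow_eq_bot_iff _).mp hKrull
  refine ⟨1 + -(r : R), ⟨-(r : R), I.neg_mem r.2, rfl⟩, ?_⟩
  rw [← Submodule.Quotient.mk_eq_zero, ← Submodule.mkQ_apply, add_mul, one_mul, neg_mul,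
    map_add, map_neg, ← smul_eq_mul, map_smul, hr, add_neg_cancel]

end Ideal

namespace AdicCompletion

variable {R : Type*} [CommRing R] (I : Ideal R)

theorem exists_sub_algebraMap_mem_map (hI : I.FG) (s : AdicCompletion I R) :
    ∃ r, s - algebraMap R _ r ∈ I.map (algebraMap R (AdicCompletion I R)) := by
  obtain ⟨r, hr⟩ := Ideal.Quotient.mk_surjective (evalOneₐ I s)
  refine ⟨r, ?_⟩
  rw [← ker_evalOneₐ_eq_map I hI, RingHom.mem_ker, map_sub]
  exact sub_eq_zero.mpr hr.symm

theorem mem_sup_pow_of_algebraMap_mem_map {K : Ideal R} {a : R}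
    (ha : algebraMap R (AdicCompletion I R) a ∈ K.map (algebraMap R _)) (m : ℕ) :
    a ∈ K ⊔ I ^ m := by
  have hcomp : (evalₐ I m : AdicCompletion I R →+* R ⧸ I ^ m).comp
      (algebraMap R (AdicCompletion I R)) = Ideal.Quotient.mk (I ^ m) :=
    RingHom.ext fun b => (evalₐ I m).commutes b
  rw [← Ideal.mem_quotient_iff_mem_sup, ← hcomp, ← Ideal.map_map]
  exact Ideal.mem_map_of_mem _ ha

end AdicCompletion

theorem IsLocalization.map_eq_map_of_forall_exists_mul_mem {R S : Type*} [CommRing R]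
    [CommRing S] [Algebra R S] (M : Submonoid R) [IsLocalization M S] {J K : Ideal R}
    (hKJ : K ≤ J) (h : ∀ a ∈ J, ∃ s ∈ M, s * a ∈ K) :
    J.map (algebraMap R S) = K.map (algebraMap R S) := by
  refine le_antisymm (Ideal.map_le_iff_le_comap.mpr fun a ha => ?_) (Ideal.map_mono hKJ)
  obtain ⟨s, hs, hsa⟩ := h a ha
  have hmem := Ideal.mem_map_of_mem (algebraMap R S) hsa
  rw [map_mul] at hmem
  exact (Ideal.unit_mul_mem_iff_mem _ (map_units S ⟨s, hs⟩)).mp hmem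

theorem divisorial_ideal_principal_in_zariski_localization_general
    {B : Type*} [CommRing B] [IsNoetherianRing B]
    (I : Ideal B) (J : Ideal B)
    (hprin : (J.map (algebraMap B (AdicCompletion I B))).IsPrincipal) :
    (J.map (algebraMap B (Localization (onePlus I)))).IsPrincipal := by
  have hI : I.FG := IsNoetherian.noetherian I
  have := AdicCompletion.isAdicComplete_self I hI
  obtain ⟨y, hyJ, hy⟩ := Ideal.exists_mem_map_eq_span_singleton _
    (IsAdicComplete.le_jacobson_bot _) (AdicCompletion.exists_sub_algebraMap_mem_map I hI)
    (IsNoetherian.noetherian J) hprin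
  refine ⟨⟨algebraMap B _ y, ?_⟩⟩
  rw [Ideal.submodule_span_eq, ← Set.image_singleton, ← Ideal.map_span]
  refine IsLocalization.map_eq_map_of_forall_exists_mul_mem (onePlus I)
    (Ideal.span_singleton_le_iff_mem _ |>.mpr hyJ) fun a ha => ?_
  refine Ideal.exists_mem_onePlus_mul_mem_of_forall_mem_sup_pow
    (AdicCompletion.mem_sup_pow_of_algebraMap_mem_map I ?_)
  rw [Ideal.map_span, Set.image_singleton, ← hy]
  exact Ideal.mem_map_of_mem _ ha

/-- Let `B` be a noetherian normal domain, `I ⊆ B` an ideal, and let `J`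
be the divisorial ideal `I_D` of a codimension-one cycle `D` on `Spec B` whose support is
contained in `V(I)` (every prime containing `J` contains `I`).  If `J·B̂` is principal in
the `I`-adic completion `B̂` of `B`, then `J·B'` is principal, where `B' = (1+I)⁻¹B`. -/
theorem divisorial_ideal_principal_in_zariski_localization
    {B : Type*} [CommRing B] [IsDomain B] [IsNoetherianRing B] [IsIntegrallyClosed B]
    (I : Ideal B) (J : Ideal B)
    (hsupp : ∀ P : Ideal B, P.IsPrime → J ≤ P → I ≤ P)
    (hBhat : IsDomain (AdicCompletion I B) ∧ IsIntegrallyClosed (AdicCompletion I B) ∧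
      Module.Flat B (AdicCompletion I B))
    (hprin : (J.map (algebraMap B (AdicCompletion I B))).IsPrincipal) :
    (J.map (algebraMap B (Localization (onePlus I)))).IsPrincipal :=
  divisorial_ideal_principal_in_zariski_localization_general I J hprin
end

section
/- Let B be a noetherian ring and π ∈ B. Then the natural ring homomorphism B → (B ⊗ B[1/π]) × lim_n B/π^{n+1}B, given by localization and reduction, is faithfully flat. In particular, for any scheme (or sheaf for the fppf topology) X, the induced map X(B) → X(B[1/π]) × lim_n X(B/π^{n+1}B) is injective for X separated affine. -/
/-!
Both factors are flat over `B`: the localization always, the `π`-adic completion because `B`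
is noetherian; hence so is their product. The map on spectra is surjective: a prime not
containing `π` comes from `B[1/π]`, and a prime containing `π` comes from the completion
through `B̂ → B/π`. A faithfully flat ring map is injective, so two maps `T → B` agreeing
after composition with both factors agree.
-/

open PrimeSpectrum

instance Module.Flat.prod {R M N : Type*} [CommRing R] [AddCommGroup M] [AddCommGroup N]
    [Module R M] [Module R N] [Module.Flat R M] [Module.Flat R N] :
    Module.Flat R (M × N) := by
  rw [Module.Flat.iff_lTensor_preserves_injective_linearMap]
  intro P Q _ _ _ _ f hf
  have hcomm : ⇑(TensorProduct.prodLeft R R M N Q) ∘ f.lTensor (M × N) =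
      (f.lTensor M).prodMap (f.lTensor N) ∘ TensorProduct.prodLeft R R M N P := by
    refine congrArg DFunLike.coe (TensorProduct.ext' fun ⟨m, n⟩ p => ?_ :
      (TensorProduct.prodLeft R R M N Q).toLinearMap ∘ₗ f.lTensor (M × N) =
      (f.lTensor M).prodMap (f.lTensor N) ∘ₗ (TensorProduct.prodLeft R R M N P).toLinearMap)
    simp
  refine Function.Injective.of_comp (f := TensorProduct.prodLeft R R M N Q) ?_
  rw [hcomm]
  exact (Prod.map_injective.mpr ⟨Module.Flat.lTensor_preserves_injective_linearMap f hf,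
    Module.Flat.lTensor_preserves_injective_linearMap f hf⟩).comp (LinearEquiv.injective _)

theorem PrimeSpectrum.range_comap_algebraMap_prod (R S T : Type*) [CommRing R] [CommRing S]
    [CommRing T] [Algebra R S] [Algebra R T] :
    Set.range (comap (algebraMap R (S × T))) =
      Set.range (comap (algebraMap R S)) ∪ Set.range (comap (algebraMap R T)) := by
  rw [← (primeSpectrumProd S T).symm.surjective.range_comp, Sum.range_eq]
  congr 2 <;> funext x <;>
    simp only [Function.comp_apply, primeSpectrumProd_symm_inl, primeSpectrumProd_symm_inr,
      ← comap_comp_apply] <;> rfl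

theorem PrimeSpectrum.zeroLocus_subset_range_comap_adicCompletion {R : Type*} [CommRing R]
    (I : Ideal R) : zeroLocus I ⊆ Set.range (comap (algebraMap R (AdicCompletion I R))) := by
  have hfac : (AdicCompletion.evalₐ I 1).toRingHom.comp (algebraMap R (AdicCompletion I R)) =
      Ideal.Quotient.mk (I ^ 1) := (AdicCompletion.evalₐ I 1).comp_algebraMap
  calc zeroLocus I = Set.range (comap (Ideal.Quotient.mk (I ^ 1))) := by
        rw [range_comap_of_surjective _ _ Ideal.Quotient.mk_surjective, Ideal.mk_ker, pow_one]
    _ ⊆ _ := by rw [← hfac, comap_comp]; exact Set.range_comp_subset_range _ _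

theorem PrimeSpectrum.range_comap_algebraMap_localizationAway_prod_adicCompletion
    {R : Type*} [CommRing R] (r : R) :
    Set.range (comap (algebraMap R (Localization.Away r × AdicCompletion (Ideal.span {r}) R))) =
      Set.univ := by
  refine Set.eq_univ_of_forall fun p => ?_
  rw [range_comap_algebraMap_prod, localization_away_comap_range _ r]
  by_cases hr : r ∈ p.asIdeal
  · exact .inr <| zeroLocus_subset_range_comap_adicCompletion _ <|
      (mem_zeroLocus _ _).mpr <| by simpa [Ideal.span_le] using hr
  · exact .inl <| (mem_basicOpen r p).mpr hr

/-- Let `B` be a noetherian ring and `π ∈ B`.  Then the natural ring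
homomorphism `B → B[1/π] × lim_n B/π^{n+1}B` (localization in the first factor, reduction
to the `π`-adic completion in the second) is faithfully flat.  In particular, for any
affine scheme `X = Spec T`, the induced map
`X(B) → X(B[1/π]) × X(lim_n B/π^{n+1}B)` on points is injective. -/
theorem localization_prod_completion_faithfullyFlat
    {B : Type*} [CommRing B] [IsNoetherianRing B] (π : B) :
    Module.FaithfullyFlat B ((Localization.Away π) × AdicCompletion (Ideal.span {π}) B) ∧
    ∀ (T : Type*) [CommRing T],
      Function.Injective (fun f : T →+* B =>
        ((algebraMap B (Localization.Away π)).comp f,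
         (algebraMap B (AdicCompletion (Ideal.span {π}) B)).comp f)) := by
  have hff : Module.FaithfullyFlat B
      ((Localization.Away π) × AdicCompletion (Ideal.span {π}) B) :=
    .of_comap_surjective <| Set.range_eq_univ.mp <|
      range_comap_algebraMap_localizationAway_prod_adicCompletion π
  refine ⟨hff, fun T _ f g hfg => RingHom.ext fun t =>
    FaithfulSMul.algebraMap_injective B
      (Localization.Away π × AdicCompletion (Ideal.span {π}) B) ?_⟩
  simp only [Prod.mk.injEq, RingHom.ext_iff, RingHom.comp_apply] at hfg
  simp only [Prod.algebraMap_apply, hfg.1 t, hfg.2 t]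
end

section
/- Let E be a finite-dimensional rational vector space and let σ, σ' ⊆ E be polytopes with nonempty intersection, regarded via the cones C(σ), C(σ') over {1}×σ, {1}×σ' in ℚ ⊕ E. Then the dual cones satisfy C(σ)^∨ + C(σ')^∨ = C(σ ∩ σ')^∨. -/
open Set Pointwise

variable {d : ℕ}

/-- A (compact convex, nonempty) polytope in `ℚ^d`: the convex hull of a nonempty finite
set of points. -/
def IsPolytope (σ : Set (Fin d → ℚ)) : Prop :=
  ∃ s : Finset (Fin d → ℚ), s.Nonempty ∧ σ = convexHull ℚ (s : Set (Fin d → ℚ))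

/-- The cone `C(σ) ⊆ ℚ ⊕ ℚ^d` over a set `σ ⊆ ℚ^d` placed at height `1`. -/
def coneOver (σ : Set (Fin d → ℚ)) : Set (ℚ × (Fin d → ℚ)) :=
  {p | ∃ t : ℚ, 0 ≤ t ∧ ∃ x ∈ σ, p = (t, t • x)}

/-- The dual cone of a subset of `ℚ ⊕ ℚ^d`, consisting of all linear functionals that are
nonnegative on it. -/
def dualCone (C : Set (ℚ × (Fin d → ℚ))) : Set ((ℚ × (Fin d → ℚ)) →ₗ[ℚ] ℚ) :=
  {φ | ∀ p ∈ C, 0 ≤ φ p}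

/-!
A functional nonnegative on `C(σ ∩ σ') = C(σ) ∩ C(σ')` must be split as `ψ + (φ - ψ)` with
`ψ ≥ 0` on the generators `(1, a)` of `C(σ)` and `φ - ψ ≥ 0` on the generators `(1, b)` of
`C(σ')`. Finding `ψ` is a linear feasibility problem, and Farkas' lemma over an ordered field
shows it is feasible exactly because `φ ≥ 0` on the intersection. Farkas' lemma for finitely
generated cones is proved by induction on the number of generators: a generator `a` on which
the inductively found functional is negative is projected away along `a`.
-/

namespace PointedCone

lemma mem_hull_image_iff {R M N : Type*} [Semiring R] [PartialOrder R] [IsOrderedRing R]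
    [AddCommMonoid M] [Module R M] [AddCommMonoid N] [Module R N] (f : M →ₗ[R] N) (s : Set M)
    {y : N} : y ∈ hull R (f '' s) ↔ ∃ x ∈ hull R s, f x = y := by
  show y ∈ Submodule.span _ (f.restrictScalars {c : R // 0 ≤ c} '' s) ↔ _
  rw [Submodule.span_image, Submodule.mem_map]
  rfl

lemma nonneg_of_mem_hull {R M : Type*} [CommSemiring R] [PartialOrder R] [IsOrderedRing R]
    [AddCommMonoid M] [Module R M] {s : Set M} {φ : Module.Dual R M} (hφ : ∀ a ∈ s, 0 ≤ φ a)
    {x : M} (hx : x ∈ hull R s) : 0 ≤ φ x := by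
  simpa using (dual_hull (p := Module.Dual.eval R M) s).ge (by simpa using hφ) hx

end PointedCone

section ProjAlong

variable {𝕜 V : Type*} [Field 𝕜] [AddCommGroup V] [Module 𝕜 V]

/-- For `φ a ≠ 0`, the projection of `V` onto `ker φ` along `a`. -/
def Module.Dual.projAlong (φ : Module.Dual 𝕜 V) (a : V) : V →ₗ[𝕜] V :=
  LinearMap.id - (φ a)⁻¹ • φ.smulRight a

lemma Module.Dual.projAlong_apply (φ : Module.Dual 𝕜 V) (a v : V) :
    φ.projAlong a v = v - ((φ a)⁻¹ * φ v) • a := by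
  simp [Module.Dual.projAlong, mul_smul]

end ProjAlong

namespace PointedCone

variable {𝕜 V : Type*} [Field 𝕜] [LinearOrder 𝕜] [IsStrictOrderedRing 𝕜]
  [AddCommGroup V] [Module 𝕜 V]

theorem exists_dual_separating_of_notMem_hull {ι : Type*} (s : Finset ι) (v : ι → V) {x : V}
    (hx : x ∉ hull 𝕜 (v '' s)) : ∃ φ : Module.Dual 𝕜 V, (∀ i ∈ s, 0 ≤ φ (v i)) ∧ φ x < 0 := by
  classical
  induction s using Finset.induction_on generalizing v x with
  | empty =>
    have hx0 : x ≠ 0 := by simpa using hx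
    obtain ⟨φ, hφ⟩ : ∃ φ : Module.Dual 𝕜 V, φ x ≠ 0 := by
      by_contra! h
      exact hx0 ((Module.forall_dual_apply_eq_zero_iff 𝕜 x).mp h)
    exact ⟨-(φ x)⁻¹ • φ, by simp, by simp [hφ]⟩
  | insert i s _ ih =>
    rw [Finset.coe_insert, image_insert_eq] at hx
    obtain ⟨φ, hφs, hφx⟩ := ih v fun h ↦ hx (Submodule.span_mono (subset_insert _ _) h)
    by_cases hφi : 0 ≤ φ (v i)
    · exact ⟨φ, Finset.forall_mem_insert _ _ _ |>.mpr ⟨hφi, hφs⟩, hφx⟩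
    rw [not_le] at hφi
    set π := φ.projAlong (v i)
    have hπi : π (v i) = 0 := by simp [π, Module.Dual.projAlong_apply, hφi.ne]
    obtain ⟨ψ, hψs, hψx⟩ := ih (π ∘ v) (x := π x) <| by
      rintro hπx
      rw [image_comp, mem_hull_image_iff] at hπx
      obtain ⟨y, hy, hxy⟩ := hπx
      have hφy : 0 ≤ φ y := nonneg_of_mem_hull (by simpa using hφs) hy
      -- `x - y ∈ ker π = 𝕜 ∙ v i`, with a nonnegative coefficient since `φ (x - y) < 0`.
      refine hx (Submodule.mem_span_insert.mpr ⟨⟨(φ (v i))⁻¹ * φ (x - y), ?_⟩, y, hy, ?_⟩)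
      · have hφxy : φ (x - y) < 0 := by rw [map_sub]; linarith
        exact (mul_pos_of_neg_of_neg (inv_lt_zero.mpr hφi) hφxy).le
      · have hker : π (x - y) = 0 := by rw [map_sub, hxy, sub_self]
        rw [Module.Dual.projAlong_apply, sub_eq_zero] at hker
        rw [Nonneg.mk_smul, ← hker, sub_add_cancel]
    exact ⟨ψ ∘ₗ π, Finset.forall_mem_insert _ _ _ |>.mpr ⟨by simp [hπi], hψs⟩, hψx⟩

/-- Farkas' lemma in `V × 𝕜`, for the generators `(a, 0)`, `a ∈ s`, and `(-b, -φ b)`, `b ∈ t`,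
and the point `(0, 1)`: a functional separating them is `(ψ, -1)` up to a positive scalar. -/
theorem exists_dual_split_of_nonneg_on_inf {s t : Finset V} {φ : Module.Dual 𝕜 V}
    (hφ : ∀ x ∈ hull 𝕜 (s : Set V) ⊓ hull 𝕜 (t : Set V), 0 ≤ φ x) :
    ∃ ψ : Module.Dual 𝕜 V, (∀ a ∈ s, 0 ≤ ψ a) ∧ ∀ b ∈ t, 0 ≤ (φ - ψ) b := by
  let f : V →ₗ[𝕜] V × 𝕜 := LinearMap.inl 𝕜 V 𝕜
  let g : V →ₗ[𝕜] V × 𝕜 := -LinearMap.id.prod φ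
  have hgen : Sum.elim f g '' (s.disjSum t : Set (V ⊕ V)) = f '' s ∪ g '' t := by
    ext; simp
  obtain ⟨Ψ, hΨ, hΨ₀⟩ := exists_dual_separating_of_notMem_hull (𝕜 := 𝕜) (s.disjSum t)
      (Sum.elim f g) (x := ((0 : V), (1 : 𝕜))) <| by
    rw [hgen, hull, Submodule.span_union, Submodule.mem_sup]
    rintro ⟨_, hy, _, hz, hyz⟩
    obtain ⟨c, hc, rfl⟩ := (mem_hull_image_iff f _).mp hy
    obtain ⟨e, he, rfl⟩ := (mem_hull_image_iff g _).mp hz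
    have hce : c = e := by
      simpa [f, g, ← sub_eq_add_neg, sub_eq_zero] using congrArg Prod.fst hyz
    have hφe : φ e = -1 := by simpa [f, g, neg_eq_iff_eq_neg] using congrArg Prod.snd hyz
    subst hce
    linarith [hφ c ⟨hc, he⟩]
  have hg : ∀ b, g b = -f b - φ b • ((0 : V), (1 : 𝕜)) := fun b ↦ by ext <;> simp [f, g]
  refine ⟨(-Ψ (0, 1))⁻¹ • (Ψ ∘ₗ f), fun a ha ↦ ?_, fun b hb ↦ ?_⟩
  · have hΨa := hΨ (.inl a) (by simpa using ha)
    simp only [LinearMap.smul_apply, LinearMap.comp_apply, smul_eq_mul]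
    exact mul_nonneg (by simpa using hΨ₀.le) hΨa
  · have hΨb := hΨ (.inr b) (by simpa using hb)
    simp only [Sum.elim_inr, hg, map_sub, map_neg, map_smul, smul_eq_mul] at hΨb
    simp only [LinearMap.sub_apply, LinearMap.smul_apply, LinearMap.comp_apply, smul_eq_mul]
    rw [sub_nonneg, inv_mul_le_iff₀ (by linarith)]
    linarith

theorem dual_inf_of_fg {C D : PointedCone 𝕜 V} (hC : C.FG) (hD : D.FG) :
    dual (Module.Dual.eval 𝕜 V) (C ⊓ D : PointedCone 𝕜 V) =
      dual (Module.Dual.eval 𝕜 V) C ⊔ dual (Module.Dual.eval 𝕜 V) D := by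
  obtain ⟨s, rfl⟩ := hC
  obtain ⟨t, rfl⟩ := hD
  refine le_antisymm (fun φ hφ ↦ ?_) (sup_le (dual_anti fun _ h ↦ h.1) (dual_anti fun _ h ↦ h.2))
  obtain ⟨ψ, hψ, hφψ⟩ := exists_dual_split_of_nonneg_on_inf (fun x hx ↦ by simpa using hφ hx)
  exact Submodule.mem_sup.mpr ⟨ψ, (dual_hull _).ge (by simpa using hψ),
    φ - ψ, (dual_hull _).ge (by simpa using hφψ), add_sub_cancel _ _⟩

end PointedCone

open PointedCone

lemma dualCone_eq_dual (C : Set (ℚ × (Fin d → ℚ))) :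
    dualCone C = (dual (Module.Dual.eval ℚ (ℚ × (Fin d → ℚ))) C : Set _) := by
  ext; simp [dualCone]

lemma coneOver_inter {σ σ' : Set (Fin d → ℚ)} (hne : (σ ∩ σ').Nonempty) :
    coneOver (σ ∩ σ') = coneOver σ ∩ coneOver σ' := by
  refine Subset.antisymm
    (fun _ ⟨t, ht, x, hx, hp⟩ ↦ ⟨⟨t, ht, x, hx.1, hp⟩, ⟨t, ht, x, hx.2, hp⟩⟩) ?_
  rintro _ ⟨⟨t, ht, x, hx, rfl⟩, ⟨u, -, y, hy, hp⟩⟩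
  obtain ⟨htu, hxy⟩ := Prod.ext_iff.mp hp
  obtain rfl : t = u := htu
  rcases ht.eq_or_lt with rfl | ht
  · obtain ⟨z, hz⟩ := hne
    exact ⟨0, le_rfl, z, hz, by simp⟩
  · obtain rfl : x = y := smul_right_injective _ ht.ne' hxy
    exact ⟨t, ht.le, x, ⟨hx, hy⟩, rfl⟩

lemma coneOver_convexHull {s : Set (Fin d → ℚ)} (hs : s.Nonempty) :
    coneOver (convexHull ℚ s) = (hull ℚ ((fun x ↦ ((1 : ℚ), x)) '' s) : Set _) := by
  have hlift : (fun x ↦ ((1 : ℚ), x)) '' s = {1} ×ˢ s := (singleton_prod).symm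
  refine Subset.antisymm ?_ fun p hp ↦ ?_
  · rintro _ ⟨t, ht, x, hx, rfl⟩
    have h1x : ((1 : ℚ), x) ∈ hull ℚ ((fun x ↦ ((1 : ℚ), x)) '' s) := by
      refine convexHull_min subset_hull (hull ℚ _).convex ?_
      rw [hlift, convexHull_prod, convexHull_singleton]
      exact ⟨rfl, hx⟩
    simpa using (hull ℚ _).smul_mem ht h1x
  · induction hp using Submodule.span_induction with
    | mem _ h =>
      obtain ⟨x, hx, rfl⟩ := h
      exact ⟨1, zero_le_one, x, subset_convexHull ℚ s hx, by simp⟩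
    | zero =>
      obtain ⟨x, hx⟩ := hs
      exact ⟨0, le_rfl, x, subset_convexHull ℚ s hx, by ext <;> simp⟩
    | add _ _ _ _ hp hq =>
      obtain ⟨t, ht, x, hx, rfl⟩ := hp
      obtain ⟨u, hu, y, hy, rfl⟩ := hq
      obtain ⟨z, hz, hzxy⟩ := (convex_convexHull ℚ s).exists_mem_add_smul_eq hx hy ht hu
      exact ⟨t + u, add_nonneg ht hu, z, hz, by simp [hzxy]⟩
    | smul c _ _ hp =>
      obtain ⟨t, ht, x, hx, rfl⟩ := hp
      exact ⟨c * t, mul_nonneg c.2 ht, x, hx, by ext <;> simp [← Nonneg.coe_smul, mul_assoc]⟩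

/-- Let `σ, σ' ⊆ ℚ^d` be polytopes with nonempty intersection, regarded
via the cones `C(σ), C(σ')` over `{1}×σ, {1}×σ'` in `ℚ ⊕ ℚ^d`.  Then the dual cones
satisfy `C(σ)^∨ + C(σ')^∨ = C(σ ∩ σ')^∨`. -/
theorem dualCone_add_dualCone {σ σ' : Set (Fin d → ℚ)}
    (hσ : IsPolytope σ) (hσ' : IsPolytope σ') (hne : (σ ∩ σ').Nonempty) :
    dualCone (coneOver σ) + dualCone (coneOver σ') = dualCone (coneOver (σ ∩ σ')) := by
  obtain ⟨s, hs, rfl⟩ := hσ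
  obtain ⟨t, ht, rfl⟩ := hσ'
  have hfg : ∀ u : Finset (Fin d → ℚ),
      (hull ℚ ((fun x ↦ ((1 : ℚ), x)) '' (u : Set (Fin d → ℚ)))).FG :=
    fun u ↦ Submodule.fg_span (u.finite_toSet.image _)
  rw [coneOver_inter hne, coneOver_convexHull hs.to_set, coneOver_convexHull ht.to_set,
    dualCone_eq_dual, dualCone_eq_dual, dualCone_eq_dual, ← Submodule.coe_inf,
    dual_inf_of_fg (hfg s) (hfg t), Submodule.coe_sup]
end

section
/- Let Σ and Σ' be polytope decompositions of E = ℚ^d. Define Σ ⊓ Σ' to be the set of all polytopes σ ∩ σ' for σ ∈ Σ, σ' ∈ Σ' with σ ∩ σ' ≠ ∅. Then Σ ⊓ Σ' is a polytope decomposition of E and is a common subdivision of Σ and Σ' (every cell of Σ ⊓ Σ' is contained in a cell of Σ and in a cell of Σ'). -/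
open Set Pointwise

variable {d : ℕ}

/-- A polytope decomposition of `ℚ^d`: a set of polytopes covering `ℚ^d`, closed under
taking faces (nonempty convex extreme subsets), such that any two members meeting
nontrivially meet in a common face. -/
def IsPolyDecomp (D : Set (Set (Fin d → ℚ))) : Prop :=
  (∀ σ ∈ D, IsPolytope σ) ∧
  (⋃₀ D = Set.univ) ∧
  (∀ σ ∈ D, ∀ τ : Set (Fin d → ℚ), τ.Nonempty → Convex ℚ τ → IsExtreme ℚ σ τ → τ ∈ D) ∧
  (∀ σ ∈ D, ∀ τ ∈ D, (σ ∩ τ).Nonempty →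
    IsExtreme ℚ σ (σ ∩ τ) ∧ IsExtreme ℚ τ (σ ∩ τ))

/-- The common refinement `Σ ⊓ Σ'` of two polytope decompositions: all nonempty
intersections `σ ∩ σ'`. -/
def meetDecomp (D D' : Set (Set (Fin d → ℚ))) : Set (Set (Fin d → ℚ)) :=
  {ρ | ∃ σ ∈ D, ∃ τ ∈ D', (σ ∩ τ).Nonempty ∧ ρ = σ ∩ τ}

/-- A polytope decomposition is `Y`-admissible for a subgroup `Y` of translations if it is
`Y`-stable and has only finitely many `Y`-orbits of cells. -/
def IsAdmissible (Y : AddSubgroup (Fin d → ℚ)) (D : Set (Set (Fin d → ℚ))) : Prop :=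
  IsPolyDecomp D ∧
  (∀ y ∈ Y, ∀ σ ∈ D, (fun x => y + x) '' σ ∈ D) ∧
  ∃ T : Set (Set (Fin d → ℚ)), T.Finite ∧
    ∀ σ ∈ D, ∃ τ ∈ T, ∃ y ∈ Y, σ = (fun x => y + x) '' τ

/-!
A cell `σ ∩ τ` is a polytope by the Minkowski–Weyl theorem. A polytope is cut out by finitely
many half-spaces, being a linear image of a simplex (and linear images of polyhedra are polyhedra
by Fourier–Motzkin elimination); so `σ ∩ τ` is a polyhedron containing no ray, hence the convex
hull of its finitely many vertices. Two cells meet in `(σ₁ ∩ σ₂) ∩ (τ₁ ∩ τ₂)`, a face of each since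
`σ₁ ∩ σ₂` is a face of `σ₁` and `τ₁ ∩ τ₂` one of `τ₁`. For a face `R` of `σ ∩ τ`, the barycentre
`x` of the vertices of `R` lies in its relative interior, so `R` is the smallest face of `σ ∩ τ`
through `x`; this is the intersection of the smallest faces of `σ` and of `τ` through `x`, which
are cells of `Σ` and `Σ'`.
-/

theorem Finset.exists_between_of_forall_le {α : Type*} [LinearOrder α] [Nonempty α]
    (L U : Finset α) (h : ∀ l ∈ L, ∀ u ∈ U, l ≤ u) :
    ∃ t, (∀ l ∈ L, l ≤ t) ∧ ∀ u ∈ U, t ≤ u := by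
  by_cases hL : L.Nonempty
  · exact ⟨L.max' hL, fun l hl => L.le_max' l hl,
      fun u hu => L.max'_le hL _ fun l hl => h l hl u hu⟩
  by_cases hU : U.Nonempty
  · exact ⟨U.min' hU, fun l hl => absurd ⟨l, hl⟩ hL, fun u hu => U.min'_le u hu⟩
  · exact ⟨Classical.arbitrary α, fun l hl => absurd ⟨l, hl⟩ hL, fun u hu => absurd ⟨u, hu⟩ hU⟩

theorem Module.Dual.apply_prod_eq {R M : Type*} [CommSemiring R] [AddCommMonoid M] [Module R M]
    (f : Module.Dual R (M × R)) (x : M) (t : R) : f (x, t) = f (x, 0) + t * f (0, 1) := by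
  rw [← smul_eq_mul, ← map_smul, ← map_add]
  simp

section Polyhedron

variable (𝕜 : Type*) {V W : Type*} [Field 𝕜] [LinearOrder 𝕜]
  [AddCommGroup V] [Module 𝕜 V] [AddCommGroup W] [Module 𝕜 W]

def IsPolyhedron (P : Set V) : Prop :=
  ∃ (ι : Type) (_ : Fintype ι) (f : ι → Module.Dual 𝕜 V) (b : ι → 𝕜),
    P = {x | ∀ i, f i x ≤ b i}

variable {𝕜}

theorem isPolyhedron_le (f : Module.Dual 𝕜 V) (b : 𝕜) : IsPolyhedron 𝕜 {x | f x ≤ b} :=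
  ⟨Unit, inferInstance, fun _ => f, fun _ => b, by simp⟩

theorem IsPolyhedron.inter {P Q : Set V} (hP : IsPolyhedron 𝕜 P) (hQ : IsPolyhedron 𝕜 Q) :
    IsPolyhedron 𝕜 (P ∩ Q) := by
  obtain ⟨ι, _, f, b, rfl⟩ := hP
  obtain ⟨κ, _, g, c, rfl⟩ := hQ
  exact ⟨ι ⊕ κ, inferInstance, Sum.elim f g, Sum.elim b c, by ext; simp [Sum.forall]⟩

theorem isPolyhedron_eq [IsStrictOrderedRing 𝕜] (f : Module.Dual 𝕜 V) (b : 𝕜) :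
    IsPolyhedron 𝕜 {x | f x = b} := by
  convert (isPolyhedron_le f b).inter (isPolyhedron_le (-f) (-b)) using 1
  ext x
  simp [le_antisymm_iff, and_comm]

theorem isPolyhedron_iInter {κ : Type} [Finite κ] {P : κ → Set V}
    (hP : ∀ k, IsPolyhedron 𝕜 (P k)) : IsPolyhedron 𝕜 (⋂ k, P k) := by
  choose ι _ f b hP using hP
  have := Fintype.ofFinite κ
  refine ⟨Σ k, ι k, inferInstance, fun i => f i.1 i.2, fun i => b i.1 i.2, ?_⟩
  ext x
  simp [hP, Sigma.forall]

theorem IsPolyhedron.preimage {P : Set V} (hP : IsPolyhedron 𝕜 P) (L : W →ₗ[𝕜] V) :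
    IsPolyhedron 𝕜 (L ⁻¹' P) := by
  obtain ⟨ι, _, f, b, rfl⟩ := hP
  exact ⟨ι, inferInstance, fun i => f i ∘ₗ L, b, rfl⟩

theorem isPolyhedron_zero [IsStrictOrderedRing 𝕜] [FiniteDimensional 𝕜 V] :
    IsPolyhedron 𝕜 ({0} : Set V) := by
  have hzero : ({0} : Set V) = ⋂ i, {x | (Module.finBasis 𝕜 V).coord i x = 0} := by
    ext x
    simp only [Set.mem_singleton_iff, Set.mem_iInter, Set.mem_ofPred_eq,
      Module.Basis.forall_coord_eq_zero_iff]
  rw [hzero]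
  exact isPolyhedron_iInter fun i => isPolyhedron_eq _ _

theorem isPolyhedron_stdSimplex [IsStrictOrderedRing 𝕜] {ι : Type} [Fintype ι] :
    IsPolyhedron 𝕜 (stdSimplex 𝕜 ι) := by
  rw [stdSimplex_eq_inter]
  refine (isPolyhedron_iInter fun i => ?_).inter ?_
  · simpa using isPolyhedron_le (-LinearMap.proj i : Module.Dual 𝕜 (ι → 𝕜)) 0
  · simpa using isPolyhedron_eq (∑ i, LinearMap.proj i : Module.Dual 𝕜 (ι → 𝕜)) 1

/-- Fourier–Motzkin elimination: keep the inequalities not involving the `𝕜`-coordinate, and add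
every positive combination of an upper and a lower bound on it that eliminates it. -/
theorem IsPolyhedron.image_fst_field [IsStrictOrderedRing 𝕜] {P : Set (V × 𝕜)}
    (hP : IsPolyhedron 𝕜 P) : IsPolyhedron 𝕜 (Prod.fst '' P) := by
  classical
  obtain ⟨ι, _, f, b, rfl⟩ := hP
  set g : ι → Module.Dual 𝕜 V := fun i => f i ∘ₗ LinearMap.inl 𝕜 V 𝕜
  set c : ι → 𝕜 := fun i => f i (0, 1)
  have hf : ∀ i x t, f i (x, t) = g i x + t * c i := fun i x t => (f i).apply_prod_eq x t
  refine ⟨{i // c i = 0} ⊕ {pm : ι × ι // 0 < c pm.1 ∧ c pm.2 < 0}, inferInstance,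
    Sum.elim (fun i => g i) (fun pm => c pm.1.1 • g pm.1.2 - c pm.1.2 • g pm.1.1),
    Sum.elim (fun i => b i) (fun pm => c pm.1.1 * b pm.1.2 - c pm.1.2 * b pm.1.1), ?_⟩
  ext x
  simp only [Set.mem_image, Set.mem_ofPred_eq, Prod.exists, exists_and_right, exists_eq_right,
    Sum.forall, Sum.elim_inl, Sum.elim_inr, Subtype.forall, Prod.forall, LinearMap.sub_apply,
    LinearMap.smul_apply, smul_eq_mul]
  constructor
  · rintro ⟨t, ht⟩
    simp only [hf] at ht
    refine ⟨fun i hi => by simpa [hi] using ht i, fun p m ⟨hp, hm⟩ => ?_⟩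
    linarith [mul_le_mul_of_nonneg_left (ht m) hp.le,
      mul_le_mul_of_nonneg_left (ht p) (neg_nonneg.2 hm.le)]
  · rintro ⟨hzero, hpair⟩
    obtain ⟨t, hlow, hupp⟩ := Finset.exists_between_of_forall_le
      ((Finset.univ.filter fun i => c i < 0).image fun i => (b i - g i x) / c i)
      ((Finset.univ.filter fun i => 0 < c i).image fun i => (b i - g i x) / c i) (by
        simp only [Finset.mem_image, Finset.mem_filter, Finset.mem_univ, true_and]
        rintro _ ⟨m, hm, rfl⟩ _ ⟨p, hp, rfl⟩
        rw [div_le_iff_of_neg hm, div_mul_eq_mul_div, div_le_iff₀ hp]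
        linarith [hpair p m ⟨hp, hm⟩])
    refine ⟨t, fun i => ?_⟩
    rw [hf]
    rcases lt_trichotomy (c i) 0 with hi | hi | hi
    · have := hlow _ (Finset.mem_image_of_mem _ (by simpa using hi))
      rw [div_le_iff_of_neg hi] at this
      linarith
    · simpa [hi] using hzero i hi
    · have := hupp _ (Finset.mem_image_of_mem _ (by simpa using hi))
      rw [le_div_iff₀ hi] at this
      linarith

theorem IsPolyhedron.image_fst_pi_fin [IsStrictOrderedRing 𝕜] :
    ∀ {k : ℕ} {Q : Set (V × (Fin k → 𝕜))}, IsPolyhedron 𝕜 Q → IsPolyhedron 𝕜 (Prod.fst '' Q)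
  | 0, Q, hQ => by
    convert hQ.preimage (LinearMap.inl 𝕜 V (Fin 0 → 𝕜)) using 1
    ext x
    constructor
    · rintro ⟨⟨x, w⟩, hw, rfl⟩
      rwa [Subsingleton.elim w 0] at hw
    · exact fun hx => ⟨_, hx, rfl⟩
  | k + 1, Q, hQ => by
    let cons : (V × (Fin k → 𝕜)) × 𝕜 →ₗ[𝕜] V × (Fin (k + 1) → 𝕜) :=
      (LinearMap.fst 𝕜 V _ ∘ₗ LinearMap.fst 𝕜 _ 𝕜).prod
        ((Fin.consLinearEquiv 𝕜 fun _ => 𝕜).toLinearMap ∘ₗ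
          (LinearMap.snd 𝕜 _ 𝕜).prod (LinearMap.snd 𝕜 V _ ∘ₗ LinearMap.fst 𝕜 _ 𝕜))
    convert image_fst_pi_fin (image_fst_field (hQ.preimage cons)) using 1
    have hcons : ∀ x w t, cons ((x, w), t) = (x, Fin.cons t w) := fun _ _ _ => rfl
    ext x
    constructor
    · rintro ⟨⟨x, w⟩, hw, rfl⟩
      exact ⟨(x, Fin.tail w), ⟨((x, Fin.tail w), w 0), by simpa [hcons] using hw, rfl⟩, rfl⟩
    · rintro ⟨_, ⟨⟨⟨x, w⟩, t⟩, hw, rfl⟩, rfl⟩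
      exact ⟨_, hw, rfl⟩

theorem IsPolyhedron.image_fst [IsStrictOrderedRing 𝕜] [FiniteDimensional 𝕜 W]
    {Q : Set (V × W)} (hQ : IsPolyhedron 𝕜 Q) : IsPolyhedron 𝕜 (Prod.fst '' Q) := by
  let e := (Module.finBasis 𝕜 W).equivFun
  convert image_fst_pi_fin (hQ.preimage ((LinearMap.id).prodMap e.symm.toLinearMap))
    using 1
  ext x
  constructor
  · rintro ⟨⟨x, w⟩, hw, rfl⟩
    exact ⟨(x, e w), by simpa using hw, rfl⟩
  · rintro ⟨⟨x, w⟩, hw, rfl⟩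
    exact ⟨_, hw, rfl⟩

theorem IsPolyhedron.image [IsStrictOrderedRing 𝕜] [FiniteDimensional 𝕜 V]
    [FiniteDimensional 𝕜 W] {P : Set W} (hP : IsPolyhedron 𝕜 P) (L : W →ₗ[𝕜] V) :
    IsPolyhedron 𝕜 (L '' P) := by
  have hgraph : L '' P = Prod.fst '' ((LinearMap.snd 𝕜 V W ⁻¹' P) ∩
      (LinearMap.fst 𝕜 V W - L ∘ₗ LinearMap.snd 𝕜 V W) ⁻¹' {0}) := by
    ext x
    simp [sub_eq_zero, eq_comm (a := x)]
  rw [hgraph]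
  exact ((hP.preimage _).inter (isPolyhedron_zero.preimage _)).image_fst

theorem convexHull_range_eq_image_stdSimplex [IsStrictOrderedRing 𝕜] {ι : Type*} [Fintype ι]
    (v : ι → V) :
    convexHull 𝕜 (Set.range v) =
      ⇑(∑ i, (LinearMap.proj i : (ι → 𝕜) →ₗ[𝕜] 𝕜).smulRight (v i)) '' stdSimplex 𝕜 ι := by
  classical
  rw [← convexHull_basis_eq_stdSimplex, LinearMap.image_convexHull, ← Set.range_comp]
  congr 2
  ext i
  simp [Finset.sum_apply, ite_smul]

theorem Set.Finite.isPolyhedron_convexHull [IsStrictOrderedRing 𝕜] [FiniteDimensional 𝕜 V]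
    {s : Set V} (hs : s.Finite) : IsPolyhedron 𝕜 (convexHull 𝕜 s) := by
  obtain ⟨n, v, -, rfl⟩ := hs.fin_param
  rw [convexHull_range_eq_image_stdSimplex]
  exact (isPolyhedron_stdSimplex (ι := Fin n)).image _

theorem Convex.mem_of_add_smul_mem_of_sub_smul_mem [IsStrictOrderedRing 𝕜] {C : Set V}
    (hC : Convex 𝕜 C) {x u : V} {s t : 𝕜} (hs : 0 < s) (ht : 0 < t) (h₁ : x + s • u ∈ C)
    (h₂ : x - t • u ∈ C) : x ∈ C := by
  convert hC h₁ h₂ (div_pos ht (add_pos hs ht)).le (div_pos hs (add_pos hs ht)).le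
    (by field_simp; ring) using 1
  match_scalars <;> field_simp <;> ring

section Minkowski

variable {ι : Type*} [Fintype ι] (f : ι → Module.Dual 𝕜 V) (b : ι → 𝕜)

def slackSet (x : V) : Finset ι := Finset.univ.filter fun i => f i x < b i

def vertexSet : Set V :=
  {x | (∀ i, f i x ≤ b i) ∧ ∀ u, (∀ i, f i x = b i → f i u = 0) → u = 0}

variable {f b}

theorem exists_add_smul_slackSet_ssubset [IsStrictOrderedRing 𝕜] {x u : V}
    (hx : ∀ i, f i x ≤ b i) (hu : ∀ i, f i x = b i → f i u = 0) (hpos : ∃ i, 0 < f i u) :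
    ∃ t : 𝕜, 0 < t ∧ (∀ i, f i (x + t • u) ≤ b i) ∧
      slackSet f b (x + t • u) ⊂ slackSet f b x := by
  obtain ⟨i₀, hi₀, hmin⟩ := Finset.exists_min_image (Finset.univ.filter fun i => 0 < f i u)
    (fun i => (b i - f i x) / f i u) (by simpa [Finset.filter_nonempty_iff] using hpos)
  simp only [Finset.mem_filter, Finset.mem_univ, true_and] at hi₀ hmin
  set t := (b i₀ - f i₀ x) / f i₀ u
  have hslack₀ : f i₀ x < b i₀ := (hx i₀).lt_of_ne fun h => hi₀.ne' (hu i₀ h)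
  have ht : 0 < t := div_pos (sub_pos.2 hslack₀) hi₀
  have hmove : ∀ i, f i (x + t • u) = f i x + t * f i u := by simp
  refine ⟨t, ht, fun i => ?_, ?_⟩
  · rw [hmove]
    rcases le_or_gt (f i u) 0 with hi | hi
    · linarith [hx i, mul_nonpos_of_nonneg_of_nonpos ht.le hi]
    · linarith [(le_div_iff₀ hi).1 (hmin i hi)]
  have hsub : slackSet f b (x + t • u) ⊆ slackSet f b x := by
    simp only [slackSet, Finset.subset_iff, Finset.mem_filter, Finset.mem_univ, true_and, hmove]
    intro i hi
    refine (hx i).lt_of_ne fun h => ?_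
    rw [hu i h, mul_zero, add_zero, h] at hi
    exact hi.false
  have htight : f i₀ (x + t • u) = b i₀ := by
    rw [hmove, div_mul_cancel₀ _ hi₀.ne', add_sub_cancel]
  refine (Finset.ssubset_iff_of_subset hsub).2 ⟨i₀, by simpa [slackSet] using hslack₀, ?_⟩
  simp only [slackSet, Finset.mem_filter, htight, lt_irrefl, and_false, not_false_eq_true]

theorem finite_vertexSet : (vertexSet f b).Finite := by
  refine Set.Finite.of_finite_image (f := slackSet f b) (Set.toFinite _) fun x hx y hy hxy => ?_
  have hslack : slackSet f b x = slackSet f b y := hxy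
  refine (sub_eq_zero.1 (hx.2 (y - x) fun i hi => ?_)).symm
  have : ¬ f i y < b i := by
    simpa [slackSet, hi, ← hslack] using (Finset.ext_iff.1 hslack i)
  rw [map_sub, hi, le_antisymm (hy.1 i) (not_lt.1 this), sub_self]

theorem mem_convexHull_vertexSet [IsStrictOrderedRing 𝕜] (hbdd : ∀ u ≠ 0, ∃ i, 0 < f i u)
    {x : V} (hx : ∀ i, f i x ≤ b i) : x ∈ convexHull 𝕜 (vertexSet f b) := by
  induction hn : (slackSet f b x).card using Nat.strong_induction_on generalizing x with
  | _ n ih =>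
    by_cases hv : x ∈ vertexSet f b
    · exact subset_convexHull 𝕜 _ hv
    obtain ⟨u, hu, hu0⟩ : ∃ u, (∀ i, f i x = b i → f i u = 0) ∧ u ≠ 0 := by
      simpa [vertexSet, hx] using hv
    -- Moving from `x` along `±u` until a new inequality becomes tight gives two points with
    -- fewer slack inequalities, and `x` lies between them.
    have hstep : ∀ v : V, v ≠ 0 → (∀ i, f i x = b i → f i v = 0) →
        ∃ t : 𝕜, 0 < t ∧ x + t • v ∈ convexHull 𝕜 (vertexSet f b) := by
      intro v hv0 hv
      obtain ⟨t, ht, hxt, hlt⟩ := exists_add_smul_slackSet_ssubset hx hv (hbdd v hv0)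
      exact ⟨t, ht, ih _ (hn ▸ Finset.card_lt_card hlt) hxt rfl⟩
    obtain ⟨s, hs, h₁⟩ := hstep u hu0 hu
    obtain ⟨t, ht, h₂⟩ := hstep (-u) (neg_ne_zero.2 hu0) (by simpa using hu)
    rw [smul_neg, ← sub_eq_add_neg] at h₂
    exact (convex_convexHull 𝕜 _).mem_of_add_smul_mem_of_sub_smul_mem hs ht h₁ h₂

theorem exists_finset_setOf_forall_le_eq_convexHull [IsStrictOrderedRing 𝕜]
    (hbdd : ∀ u ≠ 0, ∃ i, 0 < f i u) :
    ∃ s : Finset V, {x | ∀ i, f i x ≤ b i} = convexHull 𝕜 ↑s := by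
  refine ⟨(finite_vertexSet (f := f) (b := b)).toFinset, ?_⟩
  rw [Set.Finite.coe_toFinset]
  refine subset_antisymm (fun x hx => mem_convexHull_vertexSet hbdd hx)
    (convexHull_min (fun x hx => hx.1) ?_)
  simp only [Set.ofPred_forall]
  exact convex_iInter fun i => convex_halfSpace_le (f i).isLinear (b i)

end Minkowski

theorem IsPolyhedron.exists_finset_eq_convexHull [IsStrictOrderedRing 𝕜] {P : Set V}
    (hP : IsPolyhedron 𝕜 P) (hray : ∀ x ∈ P, ∀ u ≠ 0, ∃ t : 𝕜, 0 ≤ t ∧ x + t • u ∉ P) :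
    ∃ s : Finset V, P = convexHull 𝕜 ↑s := by
  obtain ⟨ι, _, f, b, rfl⟩ := hP
  rcases Set.eq_empty_or_nonempty {x | ∀ i, f i x ≤ b i} with hempty | ⟨x, hx⟩
  · exact ⟨∅, by simpa using hempty⟩
  refine exists_finset_setOf_forall_le_eq_convexHull fun u hu => ?_
  by_contra! hrec
  obtain ⟨t, ht, hxt⟩ := hray x hx u hu
  exact hxt fun i => by
    rw [map_add, map_smul, smul_eq_mul]
    linarith [hx i, mul_nonpos_of_nonneg_of_nonpos ht (hrec i)]

theorem exists_add_smul_notMem_convexHull [IsStrictOrderedRing 𝕜] (s : Finset V) (x : V)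
    {u : V} (hu : u ≠ 0) : ∃ t : 𝕜, 0 ≤ t ∧ x + t • u ∉ convexHull 𝕜 (s : Set V) := by
  obtain ⟨φ, hφ⟩ := Module.Projective.exists_dual_eq_one 𝕜 hu
  set M := ∑ y ∈ s, |φ y|
  have hbound : convexHull 𝕜 ↑s ⊆ {y | φ y ≤ M} :=
    convexHull_min (fun y hy => (le_abs_self _).trans
      (Finset.single_le_sum (fun z _ => abs_nonneg (φ z)) hy)) (convex_halfSpace_le φ.isLinear M)
  refine ⟨max 0 (M - φ x + 1), le_max_left _ _, fun h => ?_⟩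
  have := hbound h
  simp only [Set.mem_ofPred_eq, map_add, map_smul, hφ, smul_eq_mul, mul_one] at this
  linarith [le_max_right 0 (M - φ x + 1)]

theorem exists_finset_convexHull_inter_convexHull [IsStrictOrderedRing 𝕜]
    [FiniteDimensional 𝕜 V] (s t : Finset V) :
    ∃ r : Finset V, convexHull 𝕜 (s : Set V) ∩ convexHull 𝕜 ↑t = convexHull 𝕜 ↑r :=
  (s.finite_toSet.isPolyhedron_convexHull.inter t.finite_toSet.isPolyhedron_convexHull)
    |>.exists_finset_eq_convexHull fun x _ _ hu =>
      (exists_add_smul_notMem_convexHull s x hu).imp fun _ ht => ⟨ht.1, fun h => ht.2 h.1⟩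

end Polyhedron

section Face

variable (𝕜 : Type*) {V : Type*} [Field 𝕜] [LinearOrder 𝕜] [AddCommGroup V] [Module 𝕜 V]

/-- For convex `σ ∋ x`, the smallest face of `σ` containing `x`. -/
def minFace (σ : Set V) (x : V) : Set V :=
  {y ∈ σ | ∃ μ : 𝕜, 0 < μ ∧ x + μ • (x - y) ∈ σ}

variable {𝕜} {σ τ : Set V} {x : V}

theorem minFace_subset : minFace 𝕜 σ x ⊆ σ := fun _ hy => hy.1

theorem minFace_mono (h : σ ⊆ τ) : minFace 𝕜 σ x ⊆ minFace 𝕜 τ x :=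
  fun _ hy => ⟨h hy.1, hy.2.imp fun _ hμ => ⟨hμ.1, h hμ.2⟩⟩

theorem IsExtreme.inter_inter {A B C E : Set V} (hAB : IsExtreme 𝕜 A B)
    (hCE : IsExtreme 𝕜 C E) : IsExtreme 𝕜 (A ∩ C) (B ∩ E) :=
  ⟨Set.inter_subset_inter hAB.subset hCE.subset, fun _ hx _ hy _ hz hseg =>
    ⟨hAB.left_mem_of_mem_openSegment hx.1 hy.1 hz.1 hseg,
      hCE.left_mem_of_mem_openSegment hx.2 hy.2 hz.2 hseg⟩⟩

variable [IsStrictOrderedRing 𝕜]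

theorem mem_minFace_self (hx : x ∈ σ) : x ∈ minFace 𝕜 σ x :=
  ⟨hx, 1, one_pos, by simpa using hx⟩

theorem Convex.add_smul_mem_of_le (hσ : Convex 𝕜 σ) (hx : x ∈ σ) {v : V} {μ ν : 𝕜}
    (h : x + μ • v ∈ σ) (hν : 0 ≤ ν) (hνμ : ν ≤ μ) : x + ν • v ∈ σ := by
  rcases hν.eq_or_lt with rfl | hν
  · simpa using hx
  have hμ := hν.trans_le hνμ
  simpa [smul_smul, div_mul_cancel₀ _ hμ.ne'] using
    hσ.add_smul_mem hx h ⟨div_nonneg hν.le hμ.le, div_le_one_of_le₀ hνμ hμ.le⟩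

theorem Convex.minFace_inter (hσ : Convex 𝕜 σ) (hτ : Convex 𝕜 τ) (hxσ : x ∈ σ) (hxτ : x ∈ τ) :
    minFace 𝕜 (σ ∩ τ) x = minFace 𝕜 σ x ∩ minFace 𝕜 τ x := by
  refine subset_antisymm (Set.subset_inter (minFace_mono Set.inter_subset_left)
    (minFace_mono Set.inter_subset_right)) ?_
  rintro y ⟨⟨hyσ, μ₁, hμ₁, h₁⟩, ⟨hyτ, μ₂, hμ₂, h₂⟩⟩
  exact ⟨⟨hyσ, hyτ⟩, min μ₁ μ₂, lt_min hμ₁ hμ₂,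
    hσ.add_smul_mem_of_le hxσ h₁ (lt_min hμ₁ hμ₂).le (min_le_left _ _),
    hτ.add_smul_mem_of_le hxτ h₂ (lt_min hμ₁ hμ₂).le (min_le_right _ _)⟩

theorem Convex.convex_minFace (hσ : Convex 𝕜 σ) (hx : x ∈ σ) : Convex 𝕜 (minFace 𝕜 σ x) := by
  rintro y₁ ⟨hy₁, μ₁, hμ₁, h₁⟩ y₂ ⟨hy₂, μ₂, hμ₂, h₂⟩ a b ha hb hab
  set μ := min μ₁ μ₂
  have hμ : 0 < μ := lt_min hμ₁ hμ₂
  refine ⟨hσ hy₁ hy₂ ha hb hab, μ, hμ, ?_⟩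
  convert hσ (hσ.add_smul_mem_of_le hx h₁ hμ.le (min_le_left _ _))
    (hσ.add_smul_mem_of_le hx h₂ hμ.le (min_le_right _ _)) ha hb hab using 1
  linear_combination (norm := module) (-(1 + μ)) • hab • x

theorem mem_openSegment_add_smul_sub {y : V} {μ : 𝕜} (hμ : 0 < μ) :
    x ∈ openSegment 𝕜 y (x + μ • (x - y)) := by
  have hμ' : 0 < 1 + μ := by linarith
  refine ⟨μ / (1 + μ), 1 / (1 + μ), div_pos hμ hμ', div_pos one_pos hμ', by field_simp; ring, ?_⟩
  match_scalars
  · field_simp; ring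
  · field_simp

theorem Convex.mem_minFace_of_mem_openSegment (hσ : Convex 𝕜 σ) {y₁ y₂ p : V} (hy₁ : y₁ ∈ σ)
    (hy₂ : y₂ ∈ σ) (hp : p ∈ minFace 𝕜 σ x) (hseg : p ∈ openSegment 𝕜 y₁ y₂) :
    y₁ ∈ minFace 𝕜 σ x := by
  obtain ⟨-, μ, hμ, hq⟩ := hp
  obtain ⟨a, b, ha, hb, hab, rfl⟩ := hseg
  set l := (1 + μ * b)⁻¹
  have hl : 0 < l := inv_pos.2 (by positivity)
  have hl1 : l * (1 + μ * b) = 1 := inv_mul_cancel₀ (by positivity)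
  refine ⟨hy₁, μ * a * l, by positivity, ?_⟩
  -- `x + (μ a l) • (x - y₁) = l • (x + μ • (x - p)) + (1 - l) • y₂` for `p = a • y₁ + b • y₂`.
  have hl_le : l ≤ 1 := inv_le_one_of_one_le₀ (by nlinarith)
  convert hσ hq hy₂ hl.le (sub_nonneg.2 hl_le) (add_sub_cancel l 1) using 1
  linear_combination (norm := module) (l * μ) • hab • x - hl1 • x + hl1 • y₂

theorem Convex.isExtreme_minFace (hσ : Convex 𝕜 σ) : IsExtreme 𝕜 σ (minFace 𝕜 σ x) :=
  ⟨minFace_subset, fun _ hy₁ _ hy₂ _ hp hseg => hσ.mem_minFace_of_mem_openSegment hy₁ hy₂ hp hseg⟩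

theorem IsExtreme.minFace_eq {P R : Set V} (hR : IsExtreme 𝕜 P R) (hx : x ∈ R)
    (hrel : R ⊆ minFace 𝕜 R x) : minFace 𝕜 P x = R := by
  refine subset_antisymm (fun y ⟨hy, μ, hμ, hq⟩ => ?_) (hrel.trans (minFace_mono hR.subset))
  exact hR.left_mem_of_mem_openSegment hy hq hx (mem_openSegment_add_smul_sub hμ)

theorem IsExtreme.mem_of_sum_smul_mem {s : Finset V} {R : Set V}
    (hR : IsExtreme 𝕜 (convexHull 𝕜 ↑s) R) {w : V → 𝕜} (hw₀ : ∀ y ∈ s, 0 ≤ w y)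
    (hw₁ : ∑ y ∈ s, w y = 1) (hx : ∑ y ∈ s, w y • y ∈ R) {y : V} (hy : y ∈ s)
    (hwy : 0 < w y) : y ∈ R := by
  classical
  have hrest : ∑ z ∈ s.erase y, w z = 1 - w y := by
    rw [← hw₁, ← Finset.add_sum_erase s w hy, add_sub_cancel_left]
  rcases (hrest ▸ Finset.sum_nonneg fun z hz => hw₀ z (Finset.mem_of_mem_erase hz) :
    0 ≤ 1 - w y).eq_or_lt with hm | hm
  · have hzero : ∀ z ∈ s.erase y, w z = 0 := (Finset.sum_eq_zero_iff_of_nonneg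
      fun z hz => hw₀ z (Finset.mem_of_mem_erase hz)).1 (hrest.trans hm.symm)
    rwa [← Finset.add_sum_erase s _ hy, Finset.sum_eq_zero fun z hz => by simp [hzero z hz],
      add_zero, ← sub_eq_zero.1 hm.symm, one_smul] at hx
  · -- `x` lies on the open segment from `y` to the centre of mass of the other points.
    have hz := (s.erase y).centerMass_mem_convexHull (z := id)
      (fun z hz => hw₀ z (Finset.mem_of_mem_erase hz)) (hrest ▸ hm)
      (fun z hz => Finset.mem_coe.2 (Finset.mem_of_mem_erase hz))
    refine hR.left_mem_of_mem_openSegment (subset_convexHull 𝕜 _ hy)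
      (convexHull_mono (by simp) hz) hx ⟨w y, 1 - w y, hwy, hm, by ring, ?_⟩
    rw [Finset.centerMass, hrest, smul_inv_smul₀ hm.ne', ← Finset.add_sum_erase s _ hy]
    rfl

theorem IsExtreme.exists_subset_eq_convexHull {s : Finset V} {R : Set V}
    (hR : IsExtreme 𝕜 (convexHull 𝕜 ↑s) R) (hRc : Convex 𝕜 R) :
    ∃ t ⊆ s, R = convexHull 𝕜 ↑t := by
  classical
  refine ⟨s.filter (· ∈ R), Finset.filter_subset _ _,
    subset_antisymm (fun x hx => ?_) (convexHull_min (fun y hy => (Finset.mem_filter.1 hy).2) hRc)⟩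
  obtain ⟨w, hw₀, hw₁, rfl⟩ := Finset.mem_convexHull'.1 (hR.subset hx)
  have hmem : ∀ y ∈ s, w y ≠ 0 → y ∈ R := fun y hy hwy =>
    hR.mem_of_sum_smul_mem hw₀ hw₁ hx hy ((hw₀ y hy).lt_of_ne' hwy)
  refine Finset.mem_convexHull'.2 ⟨w, fun y hy => hw₀ y (Finset.mem_filter.1 hy).1, ?_, ?_⟩
  · rwa [Finset.sum_filter_of_ne hmem]
  · exact Finset.sum_filter_of_ne fun y hy hwy => hmem y hy (left_ne_zero_of_smul hwy)

theorem Finset.convexHull_subset_minFace_centerMass {t : Finset V} (ht : t.Nonempty) :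
    convexHull 𝕜 ↑t ⊆ minFace 𝕜 (convexHull 𝕜 ↑t) (t.centerMass (fun _ => (1 : 𝕜)) id) := by
  classical
  set m : 𝕜 := (t.card : 𝕜)
  set c := t.centerMass (fun _ => (1 : 𝕜)) id
  have hm : 0 < m := Nat.cast_pos.2 ht.card_pos
  have hc : c = m⁻¹ • ∑ y ∈ t, y := by simp [c, Finset.centerMass, m]
  have hct : c ∈ convexHull 𝕜 ↑t :=
    t.centerMass_mem_convexHull (fun _ _ => zero_le_one) (by simpa using ht) fun y hy => hy
  refine convexHull_min (fun y hy => ⟨subset_convexHull 𝕜 _ hy, m⁻¹, inv_pos.2 hm, ?_⟩)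
    ((convex_convexHull 𝕜 _).convex_minFace hct)
  rw [Finset.mem_coe] at hy
  refine Finset.mem_convexHull'.2
    ⟨fun z => (1 + m⁻¹) * m⁻¹ - if z = y then m⁻¹ else 0, fun z _ => ?_, ?_, ?_⟩
  · have : (1 + m⁻¹) * m⁻¹ - m⁻¹ = m⁻¹ * m⁻¹ := by ring
    dsimp only
    split_ifs
    · rw [this]; positivity
    · rw [sub_zero]; positivity
  · rw [Finset.sum_sub_distrib, Finset.sum_ite_eq', if_pos hy, Finset.sum_const, nsmul_eq_mul]
    field_simp
    ring
  · simp only [sub_smul, Finset.sum_sub_distrib, ite_smul, zero_smul, Finset.sum_ite_eq',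
      if_pos hy, hc]
    rw [← Finset.smul_sum]
    module

theorem IsExtreme.exists_subset_minFace {s : Finset V} {R : Set V}
    (hR : IsExtreme 𝕜 (convexHull 𝕜 ↑s) R) (hRc : Convex 𝕜 R) (hne : R.Nonempty) :
    ∃ x ∈ R, R ⊆ minFace 𝕜 R x := by
  obtain ⟨t, -, rfl⟩ := hR.exists_subset_eq_convexHull hRc
  have ht : t.Nonempty := by simpa using hne
  exact ⟨_, t.centerMass_mem_convexHull (fun _ _ => zero_le_one) (by simpa using ht)
    fun y hy => hy, Finset.convexHull_subset_minFace_centerMass ht⟩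

end Face

theorem IsPolytope.convex {σ : Set (Fin d → ℚ)} (hσ : IsPolytope σ) : Convex ℚ σ := by
  obtain ⟨s, -, rfl⟩ := hσ
  exact convex_convexHull ℚ _

theorem IsPolytope.inter {σ τ : Set (Fin d → ℚ)} (hσ : IsPolytope σ) (hτ : IsPolytope τ)
    (hne : (σ ∩ τ).Nonempty) : IsPolytope (σ ∩ τ) := by
  obtain ⟨s, -, rfl⟩ := hσ
  obtain ⟨t, -, rfl⟩ := hτ
  obtain ⟨r, hr⟩ := exists_finset_convexHull_inter_convexHull (𝕜 := ℚ) s t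
  exact ⟨r, by simpa [hr] using hne, hr⟩

theorem IsPolytope.exists_eq_minFace_inter {σ τ R : Set (Fin d → ℚ)} (hσ : IsPolytope σ)
    (hτ : IsPolytope τ) (hR : IsExtreme ℚ (σ ∩ τ) R) (hRc : Convex ℚ R) (hne : R.Nonempty) :
    ∃ x ∈ σ ∩ τ, R = minFace ℚ σ x ∩ minFace ℚ τ x := by
  obtain ⟨s, -, hs⟩ := hσ.inter hτ (hne.mono hR.subset)
  obtain ⟨x, hx, hrel⟩ := (hs ▸ hR).exists_subset_minFace hRc hne
  refine ⟨x, hR.subset hx, ?_⟩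
  rw [← hσ.convex.minFace_inter hτ.convex (hR.subset hx).1 (hR.subset hx).2, hR.minFace_eq hx hrel]

theorem IsPolyDecomp.minFace_mem {D : Set (Set (Fin d → ℚ))} (hD : IsPolyDecomp D)
    {σ : Set (Fin d → ℚ)} (hσ : σ ∈ D) {x : Fin d → ℚ} (hx : x ∈ σ) : minFace ℚ σ x ∈ D :=
  hD.2.2.1 σ hσ _ ⟨x, mem_minFace_self hx⟩ ((hD.1 σ hσ).convex.convex_minFace hx)
    (hD.1 σ hσ).convex.isExtreme_minFace

/-- Let `Σ` and `Σ'` be polytope decompositions of `ℚ^d`.  Then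
`Σ ⊓ Σ'` (the set of nonempty intersections `σ ∩ σ'`) is a polytope decomposition of
`ℚ^d`, and it is a common subdivision of `Σ` and `Σ'`: every cell of `Σ ⊓ Σ'` is
contained in a cell of `Σ` and in a cell of `Σ'`. -/
theorem meetDecomp_isPolyDecomp {D D' : Set (Set (Fin d → ℚ))}
    (hD : IsPolyDecomp D) (hD' : IsPolyDecomp D') :
    IsPolyDecomp (meetDecomp D D') ∧
    ∀ ρ ∈ meetDecomp D D', (∃ σ ∈ D, ρ ⊆ σ) ∧ (∃ τ ∈ D', ρ ⊆ τ) := by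
  have ⟨hpoly, hcover, _, hmeet⟩ := hD
  have ⟨hpoly', hcover', _, hmeet'⟩ := hD'
  refine ⟨⟨?_, ?_, ?_, ?_⟩, ?_⟩
  · rintro _ ⟨σ, hσ, τ, hτ, hne, rfl⟩
    exact (hpoly σ hσ).inter (hpoly' τ hτ) hne
  · refine Set.eq_univ_of_forall fun x => ?_
    obtain ⟨σ, hσ, hxσ⟩ := Set.mem_sUnion.1 (hcover ▸ Set.mem_univ x)
    obtain ⟨τ, hτ, hxτ⟩ := Set.mem_sUnion.1 (hcover' ▸ Set.mem_univ x)
    exact ⟨σ ∩ τ, ⟨σ, hσ, τ, hτ, ⟨x, hxσ, hxτ⟩, rfl⟩, hxσ, hxτ⟩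
  · rintro _ ⟨σ, hσ, τ, hτ, -, rfl⟩ R hne hRc hR
    obtain ⟨x, hx, rfl⟩ := (hpoly σ hσ).exists_eq_minFace_inter (hpoly' τ hτ) hR hRc hne
    exact ⟨_, hD.minFace_mem hσ hx.1, _, hD'.minFace_mem hτ hx.2,
      ⟨x, mem_minFace_self hx.1, mem_minFace_self hx.2⟩, rfl⟩
  · rintro _ ⟨σ₁, hσ₁, τ₁, hτ₁, -, rfl⟩ _ ⟨σ₂, hσ₂, τ₂, hτ₂, -, rfl⟩ hne
    rw [Set.inter_inter_inter_comm] at hne ⊢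
    have hσ := hmeet σ₁ hσ₁ σ₂ hσ₂ (hne.mono Set.inter_subset_left)
    have hτ := hmeet' τ₁ hτ₁ τ₂ hτ₂ (hne.mono Set.inter_subset_right)
    exact ⟨hσ.1.inter_inter hτ.1, hσ.2.inter_inter hτ.2⟩
  · rintro _ ⟨σ, hσ, τ, hτ, -, rfl⟩
    exact ⟨⟨σ, hσ, Set.inter_subset_left⟩, ⟨τ, hτ, Set.inter_subset_right⟩⟩
end

section
/- Let E = ℚ^d and Y = ⊕_i n_i ℤ e_i. The collection of all Y-translates of all faces of the box □^d = ∏_i [0, n_i] is a Y-admissible polytope decomposition of E. -/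
open Set Pointwise

variable {d : ℕ}

/-- The lattice `⊕ᵢ nᵢ ℤ eᵢ ⊆ ℚ^d`. -/
def latticeY (n : Fin d → ℚ) : AddSubgroup (Fin d → ℚ) where
  carrier := {y | ∀ i, ∃ k : ℤ, y i = k * n i}
  zero_mem' := fun i => ⟨0, by simp⟩
  add_mem' := by
    rintro a b ha hb i
    obtain ⟨k, hk⟩ := ha i
    obtain ⟨l, hl⟩ := hb i
    exact ⟨k + l, by push_cast [Pi.add_apply, hk, hl]; ring⟩
  neg_mem' := by
    rintro a ha i
    obtain ⟨k, hk⟩ := ha i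
    exact ⟨-k, by push_cast [Pi.neg_apply, hk]; ring⟩

/-- The face of the box `∏ᵢ [0, nᵢ]` determined by a choice `c i ∈ {0, 1, 2}`:
`xᵢ = 0` if `c i = 0`, `xᵢ = nᵢ` if `c i = 1`, and `0 ≤ xᵢ ≤ nᵢ` if `c i = 2`. -/
def boxFace (n : Fin d → ℚ) (c : Fin d → Fin 3) : Set (Fin d → ℚ) :=
  {x | ∀ i, (c i = 0 → x i = 0) ∧ (c i = 1 → x i = n i) ∧
    (c i = 2 → 0 ≤ x i ∧ x i ≤ n i)}

/-!
A convex extreme subset `τ` of a product of intervals is the product of its coordinate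
projections: for `x, x' ∈ τ`, exchanging one coordinate of `x` and `x'` keeps their midpoint, so
both exchanged points lie in `τ`. Each projection is a face `{l}`, `{h}` or `[l, h]` of its
interval, so the faces of translated box faces are translated box faces. In dimension one, a
cell `{kn}` or `[kn, (k+1)n]` meeting the interior of the cell `[jn, (j+1)n]` equals it, so two
cells meet in a common face; in dimension `d` this holds coordinatewise.
-/

section Pi

open Function

variable {𝕜 ι : Type*} {E : ι → Type*}

section OrderedSemiring

variable [Semiring 𝕜] [PartialOrder 𝕜] [∀ i, AddCommMonoid (E i)] [∀ i, Module 𝕜 (E i)]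
  {A B : ∀ i, Set (E i)} {τ : Set (∀ i, E i)}

theorem isExtreme_pi (h : ∀ i, IsExtreme 𝕜 (A i) (B i)) :
    IsExtreme 𝕜 (univ.pi A) (univ.pi B) :=
  ⟨pi_mono fun i _ => (h i).subset, fun _ hx _ hy _ hz hseg i _ =>
    (h i).left_mem_of_mem_openSegment (hx i trivial) (hy i trivial) (hz i trivial)
      (Pi.openSegment_subset (s := univ) _ _ hseg i trivial)⟩

theorem IsExtreme.image_eval [DecidableEq ι] (hτ : IsExtreme 𝕜 (univ.pi A) τ) (i : ι) :
    IsExtreme 𝕜 (A i) (eval i '' τ) := by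
  refine ⟨image_subset_iff.2 fun x hx => hτ.subset hx i trivial, ?_⟩
  rintro a ha b hb _ ⟨x, hx, rfl⟩ hseg
  have hxA : x ∈ univ.pi A := hτ.subset hx
  have hx_seg : x ∈ openSegment 𝕜 (update x i a) (update x i b) := by
    rw [← Pi.image_update_openSegment]
    exact ⟨x i, hseg, update_eq_self i x⟩
  refine ⟨update x i a, hτ.left_mem_of_mem_openSegment ?_ ?_ hx hx_seg, update_self i a x⟩ <;>
    exact (update_mem_pi_iff_of_mem hxA).2 fun _ => ‹_›

end OrderedSemiring

variable [Field 𝕜] [LinearOrder 𝕜] [IsStrictOrderedRing 𝕜] [∀ i, AddCommGroup (E i)]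
  [∀ i, Module 𝕜 (E i)] [DecidableEq ι] {A : ∀ i, Set (E i)} {τ : Set (∀ i, E i)}

theorem IsExtreme.update_mem (hτ : IsExtreme 𝕜 (univ.pi A) τ) (hconv : Convex 𝕜 τ)
    {x x' : ∀ i, E i} (hx : x ∈ τ) (hx' : x' ∈ τ) (i : ι) : update x i (x' i) ∈ τ := by
  have hupd : ∀ {z z'}, z ∈ τ → z' ∈ τ → update z i (z' i) ∈ univ.pi A := fun hz hz' =>
    (update_mem_pi_iff_of_mem (hτ.subset hz)).2 fun _ => hτ.subset hz' i trivial
  have hmid : (1 / 2 : 𝕜) • update x i (x' i) + (1 / 2 : 𝕜) • update x' i (x i) =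
      (1 / 2 : 𝕜) • x + (1 / 2 : 𝕜) • x' := by
    ext j
    rcases eq_or_ne j i with rfl | hj
    · simp [add_comm]
    · simp [hj]
  exact hτ.left_mem_of_mem_openSegment (hupd hx hx') (hupd hx' hx)
    (hconv hx hx' one_half_pos.le one_half_pos.le (add_halves 1))
    ⟨1 / 2, 1 / 2, one_half_pos, one_half_pos, add_halves 1, hmid⟩

theorem IsExtreme.eq_pi_image_eval [Finite ι] (hτ : IsExtreme 𝕜 (univ.pi A) τ)
    (hconv : Convex 𝕜 τ) (hne : τ.Nonempty) : τ = univ.pi fun i => eval i '' τ := by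
  refine Subset.antisymm (fun x hx i _ => ⟨x, hx, rfl⟩) fun w hw => ?_
  choose x hx hxw using fun i => hw i trivial
  have : Fintype ι := Fintype.ofFinite ι
  suffices ∀ s : Finset ι, ∃ z ∈ τ, ∀ i ∈ s, z i = w i by
    obtain ⟨z, hz, hzw⟩ := this Finset.univ
    rwa [← funext fun i => hzw i (Finset.mem_univ i)]
  intro s
  induction s using Finset.induction_on with
  | empty => exact hne.imp fun z hz => ⟨hz, by simp⟩
  | insert j s _ ih =>
    obtain ⟨z, hz, hzw⟩ := ih
    refine ⟨update z j (x j j), hτ.update_mem hconv hz (hx j) j, fun i hi => ?_⟩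
    rcases eq_or_ne i j with rfl | hij
    · simpa using hxw i
    · simpa [hij] using hzw i ((Finset.mem_insert.1 hi).resolve_left hij)

end Pi

section Interval

variable {𝕜 : Type*}

/-- The faces `{l}`, `{h}`, `[l, h]` of an interval, indexed by `c = 0, 1, 2` as in `boxFace`. -/
def intervalFace [Preorder 𝕜] (l h : 𝕜) (c : Fin 3) : Set 𝕜 :=
  Icc (![l, h, l] c) (![l, h, h] c)

@[simp] theorem intervalFace_zero [PartialOrder 𝕜] (l h : 𝕜) : intervalFace l h 0 = {l} :=
  Icc_self l

@[simp] theorem intervalFace_one [PartialOrder 𝕜] (l h : 𝕜) : intervalFace l h 1 = {h} :=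
  Icc_self h

@[simp] theorem intervalFace_two [Preorder 𝕜] (l h : 𝕜) : intervalFace l h 2 = Icc l h :=
  rfl

theorem intervalFace_eq_Icc_of_mem_Ioo [PartialOrder 𝕜] {l h p : 𝕜} {c : Fin 3}
    (hpc : p ∈ intervalFace l h c) (hp : p ∈ Ioo l h) : intervalFace l h c = Icc l h := by
  match c with
  | 0 => exact absurd (by simpa using hpc) hp.1.ne'
  | 1 => exact absurd (by simpa using hpc) hp.2.ne
  | 2 => rfl

theorem intervalFace_nonempty [PartialOrder 𝕜] {l h : 𝕜} (hlh : l ≤ h) (c : Fin 3) :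
    (intervalFace l h c).Nonempty := by
  match c with
  | 0 => simp
  | 1 => simp
  | 2 => exact nonempty_Icc.2 hlh

variable [Field 𝕜] [LinearOrder 𝕜] [IsStrictOrderedRing 𝕜] {l h : 𝕜} {J : Set 𝕜}

theorem isExtreme_Icc_of_subset_pair (hlh : l ≤ h) (hJ : J ⊆ {l, h}) :
    IsExtreme 𝕜 (Icc l h) J := by
  refine ⟨hJ.trans (pair_subset (left_mem_Icc.2 hlh) (right_mem_Icc.2 hlh)), ?_⟩
  rintro x ⟨hlx, hxh⟩ y ⟨hly, hyh⟩ z hz hseg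
  rcases eq_or_ne x y with rfl | hxy
  · rw [openSegment_same] at hseg
    rwa [mem_singleton_iff.1 hseg] at hz
  · rw [openSegment_eq_Ioo' hxy] at hseg
    rcases hJ hz with rfl | rfl <;> grind

theorem isExtreme_Icc_intervalFace (hlh : l ≤ h) (c : Fin 3) :
    IsExtreme 𝕜 (Icc l h) (intervalFace l h c) := by
  match c with
  | 0 => simpa using isExtreme_Icc_of_subset_pair hlh (J := {l}) (by simp)
  | 1 => simpa using isExtreme_Icc_of_subset_pair hlh (J := {h}) (by simp)
  | 2 => exact .rfl

theorem Convex.exists_eq_intervalFace (hconv : Convex 𝕜 J) (hne : J.Nonempty)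
    (hJ : IsExtreme 𝕜 (Icc l h) J) : ∃ c, J = intervalFace l h c := by
  by_cases hlh : l ∈ J ∧ h ∈ J
  · have hseg := hconv.segment_subset hlh.1 hlh.2
    rw [segment_eq_Icc (hJ.subset hlh.1).2] at hseg
    exact ⟨2, hJ.subset.antisymm hseg⟩
  -- an interior point of `J` would put both endpoints into `J`
  have hpair : J ⊆ {l, h} := by
    intro z hz
    obtain ⟨hlz, hzh⟩ := hJ.subset hz
    by_contra hzlh
    have hz' : z ∈ openSegment 𝕜 l h := by
      rw [openSegment_eq_Ioo (by grind)]
      grind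
    have hl : l ∈ Icc l h := left_mem_Icc.2 (hlz.trans hzh)
    have hh : h ∈ Icc l h := right_mem_Icc.2 (hlz.trans hzh)
    exact hlh ⟨hJ.left_mem_of_mem_openSegment hl hh hz hz',
      hJ.right_mem_of_mem_openSegment hl hh hz hz'⟩
  by_cases hl : l ∈ J
  · refine ⟨0, (intervalFace_zero l h).symm ▸ hne.subset_singleton_iff.1 fun z hz => ?_⟩
    grind
  · refine ⟨1, (intervalFace_one l h).symm ▸ hne.subset_singleton_iff.1 fun z hz => ?_⟩
    grind

theorem isExtreme_intervalFace_inter {m a b : 𝕜} (hm : 0 < m) (hab : ∃ k : ℤ, b - a = k * m)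
    (c c' : Fin 3) :
    IsExtreme 𝕜 (intervalFace a (a + m) c)
      (intervalFace a (a + m) c ∩ intervalFace b (b + m) c') := by
  have hsub : ∀ {x} e, intervalFace x (x + m) e ⊆ Icc x (x + m) := fun e =>
    (isExtreme_Icc_intervalFace (by linarith) e).subset
  by_cases hI : ∃ p ∈ intervalFace a (a + m) c ∩ intervalFace b (b + m) c', p ∈ Ioo a (a + m)
  · obtain ⟨p, ⟨hpa, hpb⟩, hp⟩ := hI
    -- two points of `a + mℤ` at distance less than `m` coincide
    have hba : b = a := by
      obtain ⟨k, hk⟩ := hab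
      obtain ⟨hbp, hpb'⟩ := hsub c' hpb
      have hk1 : k < 1 := by exact_mod_cast (by nlinarith [hp.2] : (k : 𝕜) < 1)
      have hk2 : -1 < k := by exact_mod_cast (by nlinarith [hp.1] : (-1 : 𝕜) < k)
      obtain rfl : k = 0 := by omega
      simpa [sub_eq_zero] using hk
    subst hba
    rw [intervalFace_eq_Icc_of_mem_Ioo hpa hp, intervalFace_eq_Icc_of_mem_Ioo hpb hp, inter_self]
  · refine (isExtreme_Icc_of_subset_pair (by linarith) fun z hz => ?_).mono (hsub c)
      inter_subset_left
    obtain ⟨hz1, hz2⟩ := hsub c hz.1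
    grind

end Interval

def boxCell (n y : Fin d → ℚ) (c : Fin d → Fin 3) : Set (Fin d → ℚ) :=
  univ.pi fun i => intervalFace (y i) (y i + n i) (c i)

def boxCells (n : Fin d → ℚ) : Set (Set (Fin d → ℚ)) :=
  {σ | ∃ y ∈ latticeY n, ∃ c, σ = boxCell n y c}

theorem image_add_boxFace (n y : Fin d → ℚ) (c : Fin d → Fin 3) :
    (fun x => y + x) '' boxFace n c = boxCell n y c := by
  ext x
  simp only [image_add_left, mem_preimage, boxFace, boxCell, mem_ofPred_eq, mem_pi, mem_univ,
    true_implies, Pi.add_apply, Pi.neg_apply]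
  refine forall_congr' fun i => ?_
  generalize c i = k
  match k with
  | 0 => simp [neg_add_eq_zero, eq_comm]
  | 1 => simp [neg_add_eq_iff_eq_add]
  | 2 => simp [le_neg_add_iff_add_le, neg_add_le_iff_le_add]

theorem isPolytope_pi_Icc {l h : Fin d → ℚ} (hlh : l ≤ h) :
    IsPolytope (univ.pi fun i => Icc (l i) (h i)) := by
  have hfin : (univ.pi fun i => ({l i, h i} : Set ℚ)).Finite := Finite.pi fun i => toFinite _
  refine ⟨hfin.toFinset, ⟨l, by simp⟩, ?_⟩
  rw [hfin.coe_toFinset, convexHull_pi]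
  simp only [convexHull_pair, segment_eq_Icc (hlh _)]

theorem isPolytope_boxCell {n : Fin d → ℚ} (hn : ∀ i, 0 ≤ n i) (y : Fin d → ℚ)
    (c : Fin d → Fin 3) : IsPolytope (boxCell n y c) :=
  isPolytope_pi_Icc fun i => nonempty_Icc.1 (intervalFace_nonempty (by linarith [hn i]) (c i))

theorem sUnion_boxCells {n : Fin d → ℚ} (hn : ∀ i, 0 < n i) : ⋃₀ boxCells n = univ := by
  refine eq_univ_of_forall fun x => ?_
  let k : Fin d → ℤ := fun i => toIcoDiv (hn i) 0 (x i)
  refine ⟨boxCell n (fun i => k i * n i) fun _ => 2, ⟨_, fun i => ⟨k i, rfl⟩, _, rfl⟩,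
    fun i _ => ?_⟩
  have := sub_toIcoDiv_zsmul_mem_Ico (hn i) 0 (x i)
  simp only [intervalFace_two, zsmul_eq_mul, mem_Ico, mem_Icc, zero_add] at this ⊢
  constructor <;> linarith

theorem exists_eq_boxCell_of_isExtreme {n : Fin d → ℚ} (hn : ∀ i, 0 ≤ n i) {y : Fin d → ℚ}
    {c : Fin d → Fin 3} {τ : Set (Fin d → ℚ)} (hne : τ.Nonempty) (hconv : Convex ℚ τ)
    (hτ : IsExtreme ℚ (boxCell n y c) τ) : ∃ c', τ = boxCell n y c' := by
  have hface : ∀ i, ∃ c', Function.eval i '' τ = intervalFace (y i) (y i + n i) c' := fun i =>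
    (hconv.linear_image (LinearMap.proj i)).exists_eq_intervalFace (hne.image _)
      ((isExtreme_Icc_intervalFace (by linarith [hn i]) (c i)).trans (hτ.image_eval i))
  choose c' hc' using hface
  exact ⟨c', (hτ.eq_pi_image_eval hconv hne).trans (by simp only [boxCell, hc'])⟩

theorem isExtreme_boxCell_inter {n : Fin d → ℚ} (hn : ∀ i, 0 < n i) {y y' : Fin d → ℚ}
    (hy : y' - y ∈ latticeY n) (c c' : Fin d → Fin 3) :
    IsExtreme ℚ (boxCell n y c) (boxCell n y c ∩ boxCell n y' c') := by
  rw [boxCell, boxCell, ← pi_inter_distrib]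
  exact isExtreme_pi fun i => isExtreme_intervalFace_inter (hn i) (hy i) (c i) (c' i)

theorem isPolyDecomp_boxCells {n : Fin d → ℚ} (hn : ∀ i, 0 < n i) :
    IsPolyDecomp (boxCells n) := by
  refine ⟨?_, sUnion_boxCells hn, ?_, ?_⟩
  · rintro _ ⟨y, -, c, rfl⟩
    exact isPolytope_boxCell (fun i => (hn i).le) y c
  · rintro _ ⟨y, hy, c, rfl⟩ τ hne hconv hτ
    obtain ⟨c', rfl⟩ := exists_eq_boxCell_of_isExtreme (fun i => (hn i).le) hne hconv hτ
    exact ⟨y, hy, c', rfl⟩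
  · rintro _ ⟨y, hy, c, rfl⟩ _ ⟨y', hy', c', rfl⟩ -
    refine ⟨isExtreme_boxCell_inter hn (sub_mem hy' hy) c c', ?_⟩
    rw [inter_comm]
    exact isExtreme_boxCell_inter hn (sub_mem hy hy') c' c

/-- Let `Y = ⊕ᵢ nᵢ ℤ eᵢ ⊆ ℚ^d` with `nᵢ` positive integers.  The
collection of all `Y`-translates of all faces of the box `□^d = ∏ᵢ [0, nᵢ]` is a
`Y`-admissible polytope decomposition of `ℚ^d`. -/
theorem box_translates_isAdmissible (n : Fin d → ℕ) (hn : ∀ i, 0 < n i) :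
    IsAdmissible (latticeY fun i => (n i : ℚ))
      {σ | ∃ y ∈ latticeY (fun i => (n i : ℚ)), ∃ c : Fin d → Fin 3,
        σ = (fun x => y + x) '' boxFace (fun i => (n i : ℚ)) c} := by
  have hcells : {σ | ∃ y ∈ latticeY (fun i => (n i : ℚ)), ∃ c : Fin d → Fin 3,
      σ = (fun x => y + x) '' boxFace (fun i => (n i : ℚ)) c} = boxCells fun i => (n i : ℚ) := by
    simp only [image_add_boxFace, boxCells]
  refine ⟨hcells ▸ isPolyDecomp_boxCells fun i => Nat.cast_pos.2 (hn i), ?_,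
    range (boxFace fun i => (n i : ℚ)), finite_range _, ?_⟩
  · rintro v hv _ ⟨y, hy, c, rfl⟩
    exact ⟨v + y, add_mem hv hy, c, by simp only [image_image, add_assoc]⟩
  · rintro _ ⟨y, hy, c, rfl⟩
    exact ⟨_, mem_range_self c, y, hy, rfl⟩
end

section
/- Let M be a commutative monoid with a submonoid of units U (an abelian group acting on M), and suppose 1 → U → M → M/U → 1 and 1 → U → M' → M'/U → 1 are two extensions of sharp monoids by the same group of units, with a morphism η : M → M' over U inducing an isomorphism M/U ≅ M'/U. Then η is an isomorphism. -/
/-- Let `M, M'` be commutative monoids with the same group of units `U`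
(identified via `η`), viewed as extensions `1 → U → M → M/U → 1` and
`1 → U → M' → M'/U → 1` of the sharp quotient monoids by the group of units (exactness on
the left meaning that `U` acts freely).  If a morphism `η : M → M'` over `U` induces an
isomorphism `M/U ≅ M'/U` (it is bijective on unit-orbits), then `η` is an isomorphism. -/
theorem monoid_extension_five_lemma
    {M M' : Type*} [CommMonoid M] [CommMonoid M'] (η : M →* M')
    -- exactness of `1 → U → M`: the units act freely on `M`, and likewise for `M'`
    (hfreeM : ∀ (u : Mˣ) (m : M), (u : M) * m = m → u = 1)
    (hfreeM' : ∀ (u : M'ˣ) (m : M'), (u : M') * m = m → u = 1)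
    -- `η` is an isomorphism on the groups of units (it is "the identity on `U`")
    (hunits : Function.Bijective (Units.map (η : M →* M') : Mˣ → M'ˣ))
    -- `η` induces a surjection on the quotient monoids `M/U → M'/U`
    (hquot_surj : ∀ m' : M', ∃ m : M, ∃ u : M'ˣ, m' = (u : M') * η m)
    -- `η` induces an injection on the quotient monoids `M/U → M'/U`
    (hquot_inj : ∀ m₁ m₂ : M, (∃ u : M'ˣ, η m₁ = (u : M') * η m₂) →
      ∃ v : Mˣ, m₁ = (v : M) * m₂) :
    Function.Bijective η := by
  constructor
  · intro m₁ m₂ h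
    obtain ⟨v, hv⟩ := hquot_inj m₁ m₂ ⟨1, by simpa using h⟩
    have h' : (Units.map (η : M →* M') v : M') * η m₂ = η m₂ := by
      have := congrArg η hv
      simp [Units.coe_map] at this
      rw [h] at this
      exact this.symm
    have : Units.map (η : M →* M') v = 1 := hfreeM' _ _ h'
    have hv1 : v = 1 := hunits.injective (by simpa using this)
    simpa [hv1] using hv
  · intro m'
    obtain ⟨m, u, hu⟩ := hquot_surj m'
    obtain ⟨v, hv⟩ := hunits.surjective u
    refine ⟨(v : M) * m, ?_⟩
    have : η (v : M) = (u : M') := by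
      rw [← hv]; rfl
    rw [map_mul, this, ← hu]
end
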